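/- arXiv:2512.24817 — 4 statements merged into one kernel-verified Lean document; each statement's English description precedes it below -/
import Mathlib

section
/- Let p be an odd prime and k a positive integer, and let G = GL₂(ℤ/p^kℤ). For every subgroup R of G, the natural number m defined by #{g ∈ G : gRg⁻¹ ⊆ B₀(p^k)} = m · #B₀(p^k) belongs to the set {0} ∪ {p^j : 0 ≤ j < k} ∪ {2p^j : 0 ≤ j < k} ∪ {p^k + p^{k-1}}. Equivalently, S(B₀(p^k)) ⊆ {0} ∪ {p^j : 0 ≤ j < k} ∪ {2p^j : 0 ≤ j < k} ∪ {p^k + p^{k-1}}. -/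
open Matrix

abbrev GL2 (N : ℕ) := GL (Fin 2) (ZMod N)

/-- The Borel subgroup `B₀(N)` of upper-triangular matrices, as a set. -/
def B0 (N : ℕ) : Set (GL2 N) :=
  {g | (g : Matrix (Fin 2) (Fin 2) (ZMod N)) 1 0 = 0}

/-- The number of `g` with `g R g⁻¹ ⊆ H`. -/
noncomputable def conjCount {N : ℕ} (H : Set (GL2 N)) (R : Subgroup (GL2 N)) : ℕ :=
  Nat.card {g : GL2 N | ∀ r ∈ R, g * r * g⁻¹ ∈ H}

/-- `S(H)`: the set of `m` with `#{g : gRg⁻¹ ⊆ H} = m * #H` for some subgroup `R`. -/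
def Sset {N : ℕ} (H : Set (GL2 N)) : Set ℕ :=
  {m | ∃ R : Subgroup (GL2 N), conjCount H R = m * Nat.card H}


namespace IsoCount

variable {p k : ℕ}

/-- capped p-adic valuation on `ZMod (p^k)` -/
noncomputable def nu (p k : ℕ) (x : ZMod (p^k)) : ℕ :=
  @Nat.findGreatest (fun c => (p:ZMod (p^k))^c ∣ x) (Classical.decPred _) k

lemma nu_le (x : ZMod (p^k)) : nu p k x ≤ k := by
  classical
  unfold nu; exact Nat.findGreatest_le k

lemma pk_pos (hp : p.Prime) : 0 < p^k := pow_pos hp.pos k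

lemma pow_dvd_of_le_nu {x : ZMod (p^k)} {c : ℕ} (h : c ≤ nu p k x) :
    (p:ZMod (p^k))^c ∣ x := by
  classical
  have hs : (p:ZMod (p^k))^(nu p k x) ∣ x := by
    unfold nu
    exact Nat.findGreatest_spec (P := fun c => (p:ZMod (p^k))^c ∣ x) (Nat.zero_le k) (by simpa using (one_dvd x))
  exact dvd_trans (pow_dvd_pow _ h) hs

lemma le_nu_of_pow_dvd {x : ZMod (p^k)} {c : ℕ} (hc : c ≤ k)
    (h : (p:ZMod (p^k))^c ∣ x) : c ≤ nu p k x := by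
  classical
  unfold nu; exact Nat.le_findGreatest hc h

lemma le_nu_iff {x : ZMod (p^k)} {c : ℕ} (hc : c ≤ k) :
    c ≤ nu p k x ↔ (p:ZMod (p^k))^c ∣ x :=
  ⟨pow_dvd_of_le_nu, le_nu_of_pow_dvd hc⟩

lemma pow_k_eq_zero : (p:ZMod (p^k))^k = 0 := by
  have : ((p^k : ℕ) : ZMod (p^k)) = 0 := ZMod.natCast_self _
  push_cast at this; exact this

lemma nu_zero : nu p k (0 : ZMod (p^k)) = k :=
  le_antisymm (nu_le _) (le_nu_of_pow_dvd le_rfl (dvd_zero _))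

lemma eq_zero_of_nu_eq_k {x : ZMod (p^k)} (h : nu p k x = k) : x = 0 := by
  have := pow_dvd_of_le_nu (x := x) (c := k) h.ge
  rw [pow_k_eq_zero] at this
  exact zero_dvd_iff.mp this

lemma natCast_val_eq {n : ℕ} [NeZero n] (y : ZMod n) : ((y.val : ℕ) : ZMod n) = y := by
  simp [ZMod.natCast_val, ZMod.cast_id]

lemma isUnit_iff_not_dvd (hp : p.Prime) (hk : 0 < k) (y : ZMod (p^k)) :
    IsUnit y ↔ ¬ (p:ZMod (p^k)) ∣ y := by
  haveI : NeZero (p^k) := ⟨(pk_pos hp).ne'⟩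
  constructor
  · rintro hu ⟨z, rfl⟩
    have hpu : IsUnit (p : ZMod (p^k)) := isUnit_of_mul_isUnit_left hu
    have : IsUnit ((p:ℕ) : ZMod (p^k)) := by exact_mod_cast hpu
    rw [ZMod.isUnit_iff_coprime] at this
    have h1 : p ∣ Nat.gcd p (p^k) := Nat.dvd_gcd dvd_rfl (dvd_pow_self p hk.ne')
    rw [Nat.Coprime] at this
    rw [this] at h1
    have h2 := hp.one_lt
    have := Nat.dvd_one.mp h1
    omega
  · intro hd
    have hy : ((y.val : ℕ) : ZMod (p^k)) = y := natCast_val_eq y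
    rw [← hy, ZMod.isUnit_iff_coprime]
    rw [Nat.coprime_pow_right_iff hk, Nat.coprime_comm]
    rw [hp.coprime_iff_not_dvd]
    intro hdvd
    exact hd (by rw [← hy]; exact_mod_cast Nat.cast_dvd_cast (α := ZMod (p^k)) hdvd)

end IsoCount

namespace IsoCount

variable {p k : ℕ}

lemma pow_ne_zero_of_lt (hp : p.Prime) {c : ℕ} (hc : c < k) : (p:ZMod (p^k))^c ≠ 0 := by
  haveI : NeZero (p^k) := ⟨(pk_pos hp).ne'⟩
  intro h
  have : ((p^c : ℕ) : ZMod (p^k)) = 0 := by push_cast; exact h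
  rw [ZMod.natCast_eq_zero_iff] at this
  have := (Nat.pow_dvd_pow_iff_le_right hp.one_lt).mp this
  omega

lemma dvd_of_not_isUnit (hp : p.Prime) (hk : 0 < k) {y : ZMod (p^k)} (h : ¬ IsUnit y) :
    (p:ZMod (p^k)) ∣ y := by
  by_contra hd
  exact h ((isUnit_iff_not_dvd hp hk y).mpr hd)

/-- representation: every x is p^(nu x) times a unit -/
lemma exists_unit_rep (hp : p.Prime) (hk : 0 < k) (x : ZMod (p^k)) :
    ∃ u : (ZMod (p^k))ˣ, x = (p:ZMod (p^k))^(nu p k x) * u := by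
  by_cases h0 : x = 0
  · refine ⟨1, ?_⟩
    rw [h0, nu_zero, pow_k_eq_zero]; simp
  · obtain ⟨y, hy⟩ := pow_dvd_of_le_nu (x := x) le_rfl
    have hyu : IsUnit y := by
      by_contra hyn
      obtain ⟨z, hz⟩ := dvd_of_not_isUnit hp hk hyn
      have hnk : nu p k x < k := by
        rcases Nat.lt_or_ge (nu p k x) k with h | h
        · exact h
        · exact absurd (eq_zero_of_nu_eq_k (le_antisymm (nu_le x) h)) h0
      have : (p:ZMod (p^k))^(nu p k x + 1) ∣ x := by
        refine ⟨z, ?_⟩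
        calc x = (p:ZMod (p^k))^(nu p k x) * y := hy
        _ = (p:ZMod (p^k))^(nu p k x) * ((p:ZMod (p^k)) * z) := by rw [hz]
        _ = (p:ZMod (p^k))^(nu p k x + 1) * z := by ring
      have := le_nu_of_pow_dvd (by omega) this
      omega
    obtain ⟨u, hu⟩ := hyu
    exact ⟨u, by rw [hu]; exact hy⟩

lemma nu_unit_mul (hp : p.Prime) (hk : 0 < k) (u : (ZMod (p^k))ˣ) (x : ZMod (p^k)) :
    nu p k ((u:ZMod (p^k)) * x) = nu p k x := by
  apply le_antisymm
  · apply le_nu_of_pow_dvd (nu_le _)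
    have := pow_dvd_of_le_nu (x := (u:ZMod (p^k)) * x) (le_refl (nu p k _))
    exact Units.dvd_mul_left.mp this
  · apply le_nu_of_pow_dvd (nu_le _)
    exact Dvd.dvd.mul_left (pow_dvd_of_le_nu le_rfl) _

lemma nu_pow_p (hp : p.Prime) (hk : 0 < k) (c : ℕ) :
    nu p k ((p:ZMod (p^k))^c) = min c k := by
  apply le_antisymm
  · by_contra h
    push_neg at h
    have hck : min c k < k := by
      have := nu_le ((p:ZMod (p^k))^c); omega
    have hc : c < k := by omega
    simp only [min_eq_left hc.le] at h
    -- p^(c+1) ∣ p^c, derive contradiction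
    obtain ⟨z, hz⟩ := pow_dvd_of_le_nu (x := (p:ZMod (p^k))^c) (show c + 1 ≤ nu p k _ by omega)
    have hu : IsUnit (1 - (p:ZMod (p^k)) * z) := by
      rw [isUnit_iff_not_dvd hp hk]
      rintro ⟨w, hw⟩
      have : (p:ZMod (p^k)) ∣ 1 := ⟨w + z, by rw [mul_add, ← hw]; ring⟩
      have := (isUnit_iff_not_dvd hp hk (1:ZMod (p^k))).mp isUnit_one
      exact this ‹_›
    have hzero : (p:ZMod (p^k))^c * (1 - (p:ZMod (p^k)) * z) = 0 := by
      have h2 : (p:ZMod (p^k))^c * ((p:ZMod (p^k)) * z) = (p:ZMod (p^k))^c * (p:ZMod (p^k)) * z := by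
        ring
      have h3 : (p:ZMod (p^k))^c * (p:ZMod (p^k)) * z = (p:ZMod (p^k))^(c+1) * z := by ring
      rw [mul_sub, mul_one, h2, h3, ← hz, sub_self]
    obtain ⟨w, hw⟩ := hu
    have : (p:ZMod (p^k))^c = 0 := by
      have : (p:ZMod (p^k))^c * ((1 - (p:ZMod (p^k)) * z) * (↑w⁻¹ : ZMod (p^k))) = 0 := by
        rw [← mul_assoc, hzero, zero_mul]
      rwa [← hw, Units.mul_inv, mul_one] at this
    exact pow_ne_zero_of_lt hp hc this
  · exact le_nu_of_pow_dvd (min_le_right _ _) (pow_dvd_pow _ (min_le_left _ _))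

end IsoCount

namespace IsoCount

variable {p k : ℕ}

lemma nu_mul (hp : p.Prime) (hk : 0 < k) (x y : ZMod (p^k)) :
    nu p k (x * y) = min (nu p k x + nu p k y) k := by
  obtain ⟨u, hu⟩ := exists_unit_rep hp hk x
  obtain ⟨w, hw⟩ := exists_unit_rep hp hk y
  set a := nu p k x with ha
  set b := nu p k y with hb
  have : x * y = (↑(u*w) : ZMod (p^k)) * (p:ZMod (p^k))^(a + b) := by
    rw [hu, hw]; push_cast; ring
  rw [this, nu_unit_mul hp hk, nu_pow_p hp hk]

lemma nu_neg (hp : p.Prime) (hk : 0 < k) (x : ZMod (p^k)) : nu p k (-x) = nu p k x := by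
  have : -x = (↑(-1 : (ZMod (p^k))ˣ) : ZMod (p^k)) * x := by push_cast; ring
  rw [this, nu_unit_mul hp hk]

lemma min_le_nu_add (x y : ZMod (p^k)) :
    min (nu p k x) (nu p k y) ≤ nu p k (x + y) := by
  apply le_nu_of_pow_dvd (le_trans (min_le_right _ _) (nu_le _))
  exact dvd_add
    (dvd_trans (pow_dvd_pow _ (min_le_left _ _)) (pow_dvd_of_le_nu le_rfl))
    (dvd_trans (pow_dvd_pow _ (min_le_right _ _)) (pow_dvd_of_le_nu le_rfl))

lemma nu_add_of_lt (hp : p.Prime) (hk : 0 < k) {x y : ZMod (p^k)}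
    (h : nu p k x < nu p k y) : nu p k (x + y) = nu p k x := by
  apply le_antisymm
  · by_contra hlt
    push_neg at hlt
    have h1 : nu p k x = nu p k ((x+y) + (-y)) := by
      congr 1; ring
    have h2 := min_le_nu_add (p := p) (k := k) (x+y) (-y)
    rw [nu_neg hp hk] at h2
    rw [← h1] at h2
    omega
  · have := min_le_nu_add (p := p) (k := k) x y
    omega

lemma nu_eq_k_iff {x : ZMod (p^k)} : nu p k x = k ↔ x = 0 :=
  ⟨eq_zero_of_nu_eq_k, fun h => h ▸ nu_zero⟩

lemma mul_eq_zero_iff_nu (hp : p.Prime) (hk : 0 < k) (x y : ZMod (p^k)) :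
    x * y = 0 ↔ k ≤ nu p k x + nu p k y := by
  rw [← nu_eq_k_iff (p := p) (k := k), nu_mul hp hk]
  constructor
  · intro h; omega
  · intro h; omega

lemma pow_mul_eq_zero_iff (hp : p.Prime) (hk : 0 < k) (c : ℕ) (x : ZMod (p^k)) :
    (p:ZMod (p^k))^c * x = 0 ↔ k ≤ c + nu p k x := by
  rw [mul_eq_zero_iff_nu hp hk, nu_pow_p hp hk]
  have := nu_le (p := p) (k := k) x
  omega

lemma not_isUnit_iff_nu (hp : p.Prime) (hk : 0 < k) (x : ZMod (p^k)) :
    ¬ IsUnit x ↔ 1 ≤ nu p k x := by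
  rw [le_nu_iff (by omega), pow_one]
  constructor
  · exact dvd_of_not_isUnit hp hk
  · intro h hu
    exact (isUnit_iff_not_dvd hp hk x).mp hu h

lemma nu_eq_of_unit_factor (hp : p.Prime) (hk : 0 < k) {c : ℕ} (hc : c < k)
    (u : (ZMod (p^k))ˣ) : nu p k ((p:ZMod (p^k))^c * u) = c := by
  rw [mul_comm, nu_unit_mul hp hk, nu_pow_p hp hk]
  omega

end IsoCount

namespace IsoCount

variable {p k : ℕ}

lemma card_dvd_set (hp : p.Prime) (hk : 0 < k) {c : ℕ} (hc : c ≤ k) :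
    Nat.card {x : ZMod (p^k) | (p:ZMod (p^k))^c ∣ x} = p^(k-c) := by
  haveI : NeZero (p^k) := ⟨(pk_pos hp).ne'⟩
  haveI : NeZero (p^(k-c)) := ⟨(pow_pos hp.pos _).ne'⟩
  have hsplit : p^k = p^c * p^(k-c) := by
    rw [← pow_add]; congr 1; omega
  have e : ZMod (p^(k-c)) ≃ {x : ZMod (p^k) | (p:ZMod (p^k))^c ∣ x} := by
    refine Equiv.ofBijective (fun y => ⟨(p:ZMod (p^k))^c * ((y.val : ℕ) : ZMod (p^k)),
      Dvd.intro _ rfl⟩) ⟨?_, ?_⟩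
    · intro y₁ y₂ h
      simp only [Subtype.mk.injEq] at h
      have h2 : ((p^c * y₁.val : ℕ) : ZMod (p^k)) = ((p^c * y₂.val : ℕ) : ZMod (p^k)) := by
        push_cast; exact h
      rw [ZMod.natCast_eq_natCast_iff, hsplit] at h2
      have h3 : y₁.val ≡ y₂.val [MOD p^(k-c)] :=
        Nat.ModEq.mul_left_cancel' (pow_pos hp.pos c).ne' h2
      have h4 : y₁.val = y₂.val := by
        have b1 := ZMod.val_lt y₁
        have b2 := ZMod.val_lt y₂
        unfold Nat.ModEq at h3
        rwa [Nat.mod_eq_of_lt b1, Nat.mod_eq_of_lt b2] at h3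
      exact ZMod.val_injective _ h4
    · rintro ⟨x, z, hz⟩
      refine ⟨((z.val : ℕ) : ZMod (p^(k-c))), ?_⟩
      simp only [Subtype.mk.injEq]
      rw [ZMod.val_natCast]
      have h5 : ((p^c * (z.val % p^(k-c)) : ℕ) : ZMod (p^k)) = ((p^c * z.val : ℕ) : ZMod (p^k)) := by
        rw [ZMod.natCast_eq_natCast_iff]
        exact Nat.ModEq.of_dvd (dvd_of_eq hsplit) (Nat.ModEq.mul_left' _ (Nat.mod_modEq _ _))
      push_cast at h5
      rw [h5, natCast_val_eq z, hz]
  rw [← Nat.card_congr e, Nat.card_zmod]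

end IsoCount

namespace IsoCount

variable {p k : ℕ}

lemma card_nu_ge (hp : p.Prime) (hk : 0 < k) {c : ℕ} (hc : c ≤ k) :
    Nat.card {x : ZMod (p^k) | c ≤ nu p k x} = p^(k-c) := by
  have hset : {x : ZMod (p^k) | c ≤ nu p k x} = {x : ZMod (p^k) | (p:ZMod (p^k))^c ∣ x} := by
    ext x; exact le_nu_iff hc
  rw [hset]; exact card_dvd_set hp hk hc

lemma card_nu_sub_ge (hp : p.Prime) (hk : 0 < k) (x₀ : ZMod (p^k)) {c : ℕ} (hc : c ≤ k) :
    Nat.card {x : ZMod (p^k) | c ≤ nu p k (x - x₀)} = p^(k-c) := by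
  have e : {x : ZMod (p^k) | c ≤ nu p k (x - x₀)} ≃ {x : ZMod (p^k) | c ≤ nu p k x} :=
    (Equiv.subRight x₀).subtypeEquiv (fun x => Iff.rfl)
  rw [Nat.card_congr e]; exact card_nu_ge hp hk hc

lemma zmod_finite (hp : p.Prime) : Finite (ZMod (p^k)) := by
  haveI : NeZero (p^k) := ⟨(pk_pos hp).ne'⟩
  infer_instance

end IsoCount

namespace IsoCount

variable {p k : ℕ}

lemma card_union_disjoint {α : Type*} [Finite α] (s t : Set α) (h : Disjoint s t) :
    Nat.card ↑(s ∪ t) = Nat.card ↑s + Nat.card ↑t := by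
  have := Set.ncard_union_eq h (Set.toFinite s) (Set.toFinite t)
  simpa [Nat.card_coe_set_eq] using this

/-- minimal valuation element of a set containing 0 -/
lemma exists_min_nu (S : Set (ZMod (p^k))) (h0 : (0:ZMod (p^k)) ∈ S) :
    ∃ z ∈ S, ∀ y ∈ S, nu p k z ≤ nu p k y := by
  have hne : {n | ∃ z ∈ S, nu p k z = n}.Nonempty := ⟨nu p k 0, 0, h0, rfl⟩
  obtain ⟨z, hz, hzn⟩ := Nat.sInf_mem hne
  refine ⟨z, hz, fun y hy => ?_⟩
  rw [hzn]
  exact Nat.sInf_le ⟨y, hy, rfl⟩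

lemma nu_sub_of_lt_left (hp : p.Prime) (hk : 0 < k) {x y : ZMod (p^k)}
    (h : nu p k x < nu p k y) : nu p k (x - y) = nu p k x := by
  have h2 := nu_add_of_lt hp hk (x := x) (y := -y)
    (by rw [nu_neg hp hk]; exact h)
  rwa [← sub_eq_add_neg] at h2

lemma nu_sub_of_lt_right (hp : p.Prime) (hk : 0 < k) {x y : ZMod (p^k)}
    (h : nu p k y < nu p k x) : nu p k (x - y) = nu p k y := by
  have h2 := nu_add_of_lt hp hk (x := -y) (y := x)
    (by rw [nu_neg hp hk]; exact h)
  have h3 : -y + x = x - y := by ring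
  rw [h3] at h2
  rw [h2, nu_neg hp hk]

lemma nu_eq_of_sub_gt (hp : p.Prime) (hk : 0 < k) {x y : ZMod (p^k)}
    (h : nu p k y < nu p k (x - y)) : nu p k x = nu p k y := by
  have h2 := nu_add_of_lt hp hk (x := y) (y := x - y) h
  have h3 : y + (x - y) = x := by ring
  rwa [h3] at h2

theorem main_count (hp : p.Prime) (hk : 0 < k)
    (N : Submodule (ZMod (p^k)) ((ZMod (p^k)) × (ZMod (p^k)))) :
    (∃ j < k, Nat.card {x : ZMod (p^k) | ∀ g ∈ N, x * (g.2 * x - g.1) = 0}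
      + Nat.card {c : ZMod (p^k) | ¬IsUnit c ∧ ∀ g ∈ N, g.1 * c - g.2 = 0} = p^j) ∨
    (∃ j < k, Nat.card {x : ZMod (p^k) | ∀ g ∈ N, x * (g.2 * x - g.1) = 0}
      + Nat.card {c : ZMod (p^k) | ¬IsUnit c ∧ ∀ g ∈ N, g.1 * c - g.2 = 0} = 2 * p^j) ∨
    (Nat.card {x : ZMod (p^k) | ∀ g ∈ N, x * (g.2 * x - g.1) = 0}
      + Nat.card {c : ZMod (p^k) | ¬IsUnit c ∧ ∀ g ∈ N, g.1 * c - g.2 = 0}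
      = p^k + p^(k-1)) := by
  haveI : NeZero (p^k) := ⟨(pk_pos hp).ne'⟩
  set A := {x : ZMod (p^k) | ∀ g ∈ N, x * (g.2 * x - g.1) = 0} with hA
  set B := {c : ZMod (p^k) | ¬IsUnit c ∧ ∀ g ∈ N, g.1 * c - g.2 = 0} with hB
  -- J and its minimal element
  obtain ⟨zt, hztJ, hztmin⟩ := exists_min_nu (p := p) (k := k)
    {z | ((0:ZMod (p^k)), z) ∈ N} (by exact N.zero_mem)
  set t := nu p k zt with ht
  have htk : t ≤ k := nu_le _
  obtain ⟨ut, hut⟩ := exists_unit_rep hp hk zt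
  -- minimal first coordinate
  obtain ⟨w0, hw0mem, hw0min⟩ := exists_min_nu (S := Prod.fst '' (N : Set (ZMod (p^k) × ZMod (p^k))))
    ⟨(0,0), N.zero_mem, rfl⟩
  set w := nu p k w0 with hwdef
  have hwk : w ≤ k := nu_le _
  have hmin1 : ∀ g, g ∈ N → w ≤ nu p k g.1 := fun g hg => hw0min _ ⟨g, hg, rfl⟩
  have hJmin : ∀ z, ((0:ZMod (p^k)), z) ∈ N → t ≤ nu p k z := fun z hz => hztmin z hz
  have hpt : (p:ZMod (p^k))^t = zt * ↑ut⁻¹ := by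
    rw [hut, mul_assoc, Units.mul_inv, mul_one]
  have hztfac : ∀ x : ZMod (p^k), x * (zt * x) = 0 → (p:ZMod (p^k))^t * x^2 = 0 := by
    intro x h1
    calc (p:ZMod (p^k))^t * x^2 = (x * (zt * x)) * ↑ut⁻¹ := by rw [hpt]; ring
    _ = 0 := by rw [h1]; ring
  have hznu : ∀ x : ZMod (p^k), ∀ z : ZMod (p^k), t ≤ nu p k z →
      (p:ZMod (p^k))^t * x^2 = 0 → z * x^2 = 0 := by
    intro x z hz h2
    obtain ⟨uz, huz⟩ := exists_unit_rep hp hk z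
    set m := nu p k z with hm
    have hsplit : (p:ZMod (p^k))^(m - t) * (p:ZMod (p^k))^t = (p:ZMod (p^k))^m := by
      rw [← pow_add]; congr 1; omega
    calc z * x^2 = ((p:ZMod (p^k))^m * ↑uz) * x^2 := by rw [← huz]
    _ = (p:ZMod (p^k))^(m - t) * ((p:ZMod (p^k))^t * x^2) * ↑uz := by rw [← hsplit]; ring
    _ = 0 := by rw [h2]; ring
  set hval := (k - t + 1) / 2 with hhval
  have hvalk : hval ≤ k := by omega
  have hC2 : ∀ x : ZMod (p^k), ((p:ZMod (p^k))^t * x^2 = 0 ↔ hval ≤ nu p k x) := by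
    intro x
    rw [pow_mul_eq_zero_iff hp hk]
    have hx2 : x^2 = x * x := sq x
    rw [hx2, nu_mul hp hk]
    have := nu_le (p := p) (k := k) x
    omega
  have hzt0_iff : zt = 0 ↔ t = k := by
    constructor
    · intro h; rw [ht, h, nu_zero]
    · intro h; exact eq_zero_of_nu_eq_k (ht.symm.trans h)
  by_cases hw : k ≤ w
  · -- w = k : all first coordinates vanish
    have hall1 : ∀ g, g ∈ N → g.1 = 0 := by
      intro g hg
      exact eq_zero_of_nu_eq_k (le_antisymm (nu_le _) (le_trans hw (hmin1 g hg)))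
    have hall2 : ∀ g, g ∈ N → t ≤ nu p k g.2 := by
      intro g hg
      apply hJmin
      have : ((0:ZMod (p^k)), g.2) = g := by
        ext
        · exact (hall1 g hg).symm
        · rfl
      rwa [this]
    have hAeq : A = {x : ZMod (p^k) | hval ≤ nu p k x} := by
      ext x
      simp only [Set.mem_setOf_eq]
      constructor
      · intro hx
        have h1 := hx (0, zt) hztJ
        simp only [sub_zero] at h1
        exact (hC2 x).mp (hztfac x h1)
      · intro hx g hg
        rw [hall1 g hg, sub_zero]
        have : x * (g.2 * x) = g.2 * x^2 := by ring
        rw [this]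
        exact hznu x g.2 (hall2 g hg) ((hC2 x).mpr hx)
    have hcardA : Nat.card ↑A = p^(k - hval) := by
      rw [hAeq]; exact card_nu_ge hp hk hvalk
    by_cases hzt0 : zt = 0
    · -- N = 0 essentially
      have htk' : t = k := hzt0_iff.mp hzt0
      have hall2' : ∀ g, g ∈ N → g.2 = 0 := by
        intro g hg
        apply eq_zero_of_nu_eq_k
        have := hall2 g hg
        have := nu_le (p := p) (k := k) g.2
        omega
      have hBeq : B = {c : ZMod (p^k) | 1 ≤ nu p k c} := by
        ext c
        simp only [hB, Set.mem_setOf_eq]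
        rw [← not_isUnit_iff_nu hp hk]
        constructor
        · exact fun h => h.1
        · intro h
          refine ⟨h, fun g hg => ?_⟩
          rw [hall1 g hg, hall2 g hg |> fun _ => hall2' g hg]
          simp
      have hcardB : Nat.card ↑B = p^(k-1) := by
        rw [hBeq]; exact card_nu_ge hp hk (by omega)
      right; right
      rw [hcardA, hcardB]
      have : hval = 0 := by omega
      rw [this]
      simp
    · -- t < k, B empty
      have htlt : t < k := by
        rcases Nat.lt_or_ge t k with h | h
        · exact h
        · exact absurd (hzt0_iff.mpr (le_antisymm htk h)) hzt0
      have hBeq : B = ∅ := by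
        ext c
        simp only [hB, Set.mem_setOf_eq, Set.mem_empty_iff_false, iff_false, not_and]
        intro _ hc
        have := hc (0, zt) hztJ
        simp only [zero_mul, zero_sub, neg_eq_zero] at this
        exact hzt0 this
      have hcardB : Nat.card ↑B = 0 := by rw [hBeq]; simp
      left
      refine ⟨k - hval, by omega, by rw [hcardA, hcardB]; omega⟩
  · -- main case : w < k
    push_neg at hw
    obtain ⟨g₀, hg₀N, hg₀1⟩ := hw0mem
    obtain ⟨u₁, hu₁⟩ := exists_unit_rep hp hk w0
    set g₁ := (↑u₁⁻¹ : ZMod (p^k)) • g₀ with hg₁def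
    have hg₁N : g₁ ∈ N := N.smul_mem _ hg₀N
    have hg₁1 : g₁.1 = (p:ZMod (p^k))^w := by
      show (↑u₁⁻¹ : ZMod (p^k)) * g₀.1 = _
      rw [hg₀1, hu₁]
      calc (↑u₁⁻¹ : ZMod (p^k)) * ((p:ZMod (p^k))^w * ↑u₁)
          = (p:ZMod (p^k))^w * (↑u₁ * ↑u₁⁻¹) := by ring
      _ = (p:ZMod (p^k))^w := by rw [Units.mul_inv, mul_one]
    set β := g₁.2 with hβdef
    set v := nu p k β with hvdef
    have hvk : v ≤ k := nu_le _
    obtain ⟨uβ, huβ⟩ := exists_unit_rep hp hk β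
    have decomp : ∀ g, g ∈ N → ∃ e z : ZMod (p^k), t ≤ nu p k z ∧
        g.1 = e * (p:ZMod (p^k))^w ∧ g.2 = e * β + z := by
      intro g hg
      have hwg : w ≤ nu p k g.1 := hmin1 g hg
      obtain ⟨ug, hug⟩ := exists_unit_rep hp hk g.1
      set s := nu p k g.1 with hs
      have hps : (p:ZMod (p^k))^(s-w) * (p:ZMod (p^k))^w = (p:ZMod (p^k))^s := by
        rw [← pow_add]; congr 1; omega
      have he1 : g.1 = ((p:ZMod (p^k))^(s-w) * ↑ug) * (p:ZMod (p^k))^w := by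
        calc g.1 = (p:ZMod (p^k))^s * ↑ug := hug
        _ = ((p:ZMod (p^k))^(s-w) * (p:ZMod (p^k))^w) * ↑ug := by rw [hps]
        _ = ((p:ZMod (p^k))^(s-w) * ↑ug) * (p:ZMod (p^k))^w := by ring
      refine ⟨(p:ZMod (p^k))^(s-w) * ↑ug, g.2 - ((p:ZMod (p^k))^(s-w) * ↑ug) * β, ?_, he1, by ring⟩
      apply hJmin
      have hmem := N.sub_mem hg (N.smul_mem ((p:ZMod (p^k))^(s-w) * ↑ug) hg₁N)
      have heq : g - ((p:ZMod (p^k))^(s-w) * ↑ug) • g₁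
          = ((0:ZMod (p^k)), g.2 - ((p:ZMod (p^k))^(s-w) * ↑ug) * β) := by
        ext
        · show g.1 - ((p:ZMod (p^k))^(s-w) * ↑ug) * g₁.1 = 0
          rw [hg₁1, he1]
          ring
        · rfl
      rwa [heq] at hmem
    have hAeq : A = {x : ZMod (p^k) | x * (β * x - (p:ZMod (p^k))^w) = 0 ∧ hval ≤ nu p k x} := by
      ext x
      constructor
      · intro hx
        constructor
        · have := hx g₁ hg₁N
          rwa [hg₁1] at this
        · have h1 := hx (0, zt) hztJ
          simp only [sub_zero] at h1
          exact (hC2 x).mp (hztfac x h1)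
      · rintro ⟨h1, h2⟩ g hg
        obtain ⟨e, z, hz, hge1, hge2⟩ := decomp g hg
        rw [hge1, hge2]
        have expand : x * ((e * β + z) * x - e * (p:ZMod (p^k))^w)
            = e * (x * (β * x - (p:ZMod (p^k))^w)) + z * x^2 := by ring
        rw [expand, h1, hznu x z hz ((hC2 x).mpr h2)]
        ring
    have hBsub : ∀ c, c ∈ B → ¬ IsUnit c ∧ (p:ZMod (p^k))^w * c - β = 0 ∧ zt = 0 := by
      intro c hc
      obtain ⟨hcu, hceq⟩ := hc
      refine ⟨hcu, ?_, ?_⟩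
      · have := hceq g₁ hg₁N
        rwa [hg₁1] at this
      · have := hceq (0, zt) hztJ
        simp only [zero_mul, zero_sub, neg_eq_zero] at this
        exact this
    have hBsup : ∀ c : ZMod (p^k), ¬ IsUnit c → (p:ZMod (p^k))^w * c - β = 0 → zt = 0 → c ∈ B := by
      intro c hcu hceq hzt0
      have htk' : t = k := hzt0_iff.mp hzt0
      refine ⟨hcu, fun g hg => ?_⟩
      obtain ⟨e, z, hz, hge1, hge2⟩ := decomp g hg
      have hz0 : z = 0 := by
        apply eq_zero_of_nu_eq_k
        have := nu_le (p := p) (k := k) z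
        omega
      rw [hge1, hge2, hz0]
      calc e * (p:ZMod (p^k))^w * c - (e * β + 0) = e * ((p:ZMod (p^k))^w * c - β) := by ring
      _ = 0 := by rw [hceq]; ring
    -- case split on v vs w
    by_cases hv : w < v
    · -- M-I : v > w
      have hnubx : ∀ x : ZMod (p^k), nu p k (β * x - (p:ZMod (p^k))^w) = w := by
        intro x
        have h1 : nu p k (-(p:ZMod (p^k))^w) = w := by
          rw [nu_neg hp hk, nu_pow_p hp hk]; omega
        have h2 : nu p k (-(p:ZMod (p^k))^w) < nu p k (β * x) := by
          rw [h1, nu_mul hp hk]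
          have := nu_le (p := p) (k := k) x
          omega
        have h3 := nu_add_of_lt hp hk h2
        have h4 : -(p:ZMod (p^k))^w + β * x = β * x - (p:ZMod (p^k))^w := by ring
        rw [h4] at h3
        rw [h3, h1]
      have hAeq2 : A = {x : ZMod (p^k) | max (k-w) hval ≤ nu p k x} := by
        rw [hAeq]; ext x; simp only [Set.mem_setOf_eq]
        rw [mul_eq_zero_iff_nu hp hk, hnubx x]
        omega
      have hcardA : Nat.card ↑A = p^(k - max (k-w) hval) := by
        rw [hAeq2]; exact card_nu_ge hp hk (by omega)
      by_cases hzt0 : zt = 0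
      · -- B is a ball of size p^w ; total 2 p^w
        have htk' : t = k := hzt0_iff.mp hzt0
        have hval0 : hval = 0 := by omega
        set c₀ := (p:ZMod (p^k))^(v-w) * ↑uβ with hc₀
        have hpvw : (p:ZMod (p^k))^w * (p:ZMod (p^k))^(v-w) = (p:ZMod (p^k))^v := by
          rw [← pow_add]; congr 1; omega
        have hpc₀ : (p:ZMod (p^k))^w * c₀ = β := by
          calc (p:ZMod (p^k))^w * ((p:ZMod (p^k))^(v-w) * ↑uβ)
              = ((p:ZMod (p^k))^w * (p:ZMod (p^k))^(v-w)) * ↑uβ := by ring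
          _ = (p:ZMod (p^k))^v * ↑uβ := by rw [hpvw]
          _ = β := huβ.symm
        have hBeq : B = {c : ZMod (p^k) | k - w ≤ nu p k (c - c₀)} := by
          ext c; simp only [Set.mem_setOf_eq]
          constructor
          · intro hc
            obtain ⟨hcu, hceq, _⟩ := hBsub c hc
            have hz : (p:ZMod (p^k))^w * (c - c₀) = 0 := by
              calc (p:ZMod (p^k))^w * (c - c₀)
                  = ((p:ZMod (p^k))^w * c - β) - ((p:ZMod (p^k))^w * c₀ - β) := by ring
              _ = 0 := by rw [hceq, hpc₀]; ring
            have := (pow_mul_eq_zero_iff hp hk w _).mp hz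
            omega
          · intro hc
            apply hBsup c
            · rw [not_isUnit_iff_nu hp hk]
              have hc₀nu : 1 ≤ nu p k c₀ := by
                have h5 : nu p k ((p:ZMod (p^k))^(v-w) * ↑uβ) = nu p k ((p:ZMod (p^k))^(v-w)) := by
                  rw [mul_comm]; exact nu_unit_mul hp hk uβ _
                rw [hc₀, h5, nu_pow_p hp hk]
                omega
              have h5 := min_le_nu_add (p := p) (k := k) c₀ (c - c₀)
              have h6 : c₀ + (c - c₀) = c := by ring
              rw [h6] at h5
              omega
            · have hz : (p:ZMod (p^k))^w * (c - c₀) = 0 :=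
                (pow_mul_eq_zero_iff hp hk w _).mpr (by omega)
              calc (p:ZMod (p^k))^w * c - β
                  = (p:ZMod (p^k))^w * (c - c₀) + ((p:ZMod (p^k))^w * c₀ - β) := by ring
              _ = 0 := by rw [hz, hpc₀]; ring
            · exact hzt0
        have hcardB : Nat.card ↑B = p^w := by
          rw [hBeq, card_nu_sub_ge hp hk c₀ (by omega)]
          congr 1; omega
        right; left
        refine ⟨w, hw, ?_⟩
        rw [hcardA, hcardB]
        have h7 : k - max (k-w) hval = w := by omega
        rw [h7]; ring
      · -- B empty
        have hBeq : B = ∅ := by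
          ext c; simp only [Set.mem_empty_iff_false, iff_false]
          intro hc
          exact hzt0 (hBsub c hc).2.2
        have hcardB : Nat.card ↑B = 0 := by rw [hBeq]; simp
        left
        refine ⟨k - max (k-w) hval, by omega, by rw [hcardA, hcardB]; omega⟩
    · -- M-II : v ≤ w
      push_neg at hv
      have hvltk : v < k := by omega
      set D := w - v with hDdef
      set K := k - v with hKdef
      set xs := (p:ZMod (p^k))^D * ↑uβ⁻¹ with hxs
      have hnuxs : nu p k xs = D := nu_eq_of_unit_factor hp hk (by omega) uβ⁻¹
      have hfac : ∀ x : ZMod (p^k), x * (β * x - (p:ZMod (p^k))^w)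
          = ((p:ZMod (p^k))^v * (x * (x - xs))) * ↑uβ := by
        intro x
        have hvw : (p:ZMod (p^k))^v * (p:ZMod (p^k))^D = (p:ZMod (p^k))^w := by
          rw [← pow_add]; congr 1; omega
        have huu : (↑uβ⁻¹ : ZMod (p^k)) * ↑uβ = 1 := Units.inv_mul uβ
        calc x * (β * x - (p:ZMod (p^k))^w)
            = x * (β * x - (p:ZMod (p^k))^w * 1) := by rw [mul_one]
        _ = x * (((p:ZMod (p^k))^v * ↑uβ) * x
              - ((p:ZMod (p^k))^v * (p:ZMod (p^k))^D) * ((↑uβ⁻¹ : ZMod (p^k)) * ↑uβ)) := by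
            rw [hvw, huu, ← huβ]
        _ = ((p:ZMod (p^k))^v * (x * (x - (p:ZMod (p^k))^D * ↑uβ⁻¹))) * ↑uβ := by ring
      have hC1iff : ∀ x : ZMod (p^k),
          (x * (β * x - (p:ZMod (p^k))^w) = 0 ↔ K ≤ nu p k x + nu p k (x - xs)) := by
        intro x
        rw [hfac x]
        have h4 := nu_mul hp hk x (x - xs)
        constructor
        · intro h
          have h2 : (p:ZMod (p^k))^v * (x * (x - xs)) = 0 := by
            calc (p:ZMod (p^k))^v * (x * (x - xs))
                = (((p:ZMod (p^k))^v * (x * (x - xs))) * ↑uβ) * ↑uβ⁻¹ := by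
                  rw [mul_assoc, Units.mul_inv, mul_one]
            _ = 0 := by rw [h]; ring
          have h3 := (pow_mul_eq_zero_iff hp hk v _).mp h2
          omega
        · intro h
          have h2 : (p:ZMod (p^k))^v * (x * (x - xs)) = 0 :=
            (pow_mul_eq_zero_iff hp hk v _).mpr (by omega)
          rw [h2, zero_mul]
      have hBeq : B = ∅ := by
        ext c; simp only [Set.mem_empty_iff_false, iff_false]
        intro hc
        obtain ⟨hcu, hceq, hzt0⟩ := hBsub c hc
        have hβeq : β = (p:ZMod (p^k))^w * c := (sub_eq_zero.mp hceq).symm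
        have hcnu : 1 ≤ nu p k c := (not_isUnit_iff_nu hp hk c).mp hcu
        have h8 : nu p k ((p:ZMod (p^k))^w * c) = min (min w k + nu p k c) k := by
          rw [nu_mul hp hk, nu_pow_p hp hk]
        have h9 : v = nu p k ((p:ZMod (p^k))^w * c) := by
          rw [hvdef, hβeq]
        omega
      have hcardB : Nat.card ↑B = 0 := by rw [hBeq]; simp
      have hAiff : ∀ x : ZMod (p^k), x ∈ A ↔
          (K ≤ nu p k x + nu p k (x - xs) ∧ hval ≤ nu p k x) := by
        intro x
        rw [hAeq]
        simp only [Set.mem_setOf_eq]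
        rw [hC1iff x]
      have hKpos : 1 ≤ K := by omega
      by_cases hDK : K ≤ 2 * D
      · -- single ball
        have hAeq2 : A = {x : ZMod (p^k) | max ((K+1)/2) hval ≤ nu p k x} := by
          ext x; rw [hAiff x]; simp only [Set.mem_setOf_eq]
          constructor
          · rintro ⟨h1, h2⟩
            apply max_le _ h2
            by_contra hlt; push_neg at hlt
            have hxD : nu p k x < D := by omega
            have h5 : nu p k (x - xs) = nu p k x :=
              nu_sub_of_lt_left hp hk (by rw [hnuxs]; exact hxD)
            omega
          · intro h1
            have h6 := min_le_nu_add (p := p) (k := k) x (-xs)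
            rw [nu_neg hp hk, hnuxs] at h6
            have h7 : x + -xs = x - xs := by ring
            rw [h7] at h6
            refine ⟨by omega, by omega⟩
        have hcardA : Nat.card ↑A = p^(k - max ((K+1)/2) hval) := by
          rw [hAeq2]; exact card_nu_ge hp hk (by omega)
        left
        refine ⟨k - max ((K+1)/2) hval, by omega, by rw [hcardA, hcardB]; omega⟩
      · push_neg at hDK
        have hKD : D < K - D := by omega
        by_cases hhD : hval ≤ D
        · -- two balls
          have hAeq2 : A = {x : ZMod (p^k) | K - D ≤ nu p k x}
              ∪ {x : ZMod (p^k) | K - D ≤ nu p k (x - xs)} := by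
            ext x; rw [hAiff x]; simp only [Set.mem_union, Set.mem_setOf_eq]
            constructor
            · rintro ⟨h1, h2⟩
              rcases lt_trichotomy (nu p k x) D with hx | hx | hx
              · exfalso
                have h5 : nu p k (x - xs) = nu p k x :=
                  nu_sub_of_lt_left hp hk (by rw [hnuxs]; exact hx)
                omega
              · right; omega
              · left
                have h5 : nu p k (x - xs) = D := by
                  have := nu_sub_of_lt_right hp hk (x := x) (y := xs) (by rw [hnuxs]; exact hx)
                  rw [hnuxs] at this; exact this
                omega
            · rintro (h1 | h1)
              · have h5 : nu p k (x - xs) = D := by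
                  have := nu_sub_of_lt_right hp hk (x := x) (y := xs)
                    (by rw [hnuxs]; omega)
                  rw [hnuxs] at this; exact this
                refine ⟨by omega, by omega⟩
              · have h5 : nu p k x = D := by
                  have := nu_eq_of_sub_gt hp hk (x := x) (y := xs) (by rw [hnuxs]; omega)
                  rw [hnuxs] at this; exact this
                refine ⟨by omega, by omega⟩
          have hdisj : Disjoint {x : ZMod (p^k) | K - D ≤ nu p k x}
              {x : ZMod (p^k) | K - D ≤ nu p k (x - xs)} := by
            rw [Set.disjoint_left]
            intro x h0 h1
            simp only [Set.mem_setOf_eq] at h0 h1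
            have h5 : nu p k x = D := by
              have := nu_eq_of_sub_gt hp hk (x := x) (y := xs) (by rw [hnuxs]; omega)
              rw [hnuxs] at this; exact this
            omega
          haveI : Finite (ZMod (p^k)) := zmod_finite hp
          have hcardA : Nat.card ↑A = p^(k - (K - D)) + p^(k - (K - D)) := by
            rw [hAeq2, card_union_disjoint _ _ hdisj,
              card_nu_ge hp hk (by omega), card_nu_sub_ge hp hk xs (by omega)]
          right; left
          refine ⟨k - (K - D), by omega, by rw [hcardA, hcardB]; omega⟩
        · -- hval > D : single ball
          push_neg at hhD
          have hAeq2 : A = {x : ZMod (p^k) | max (K - D) hval ≤ nu p k x} := by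
            ext x; rw [hAiff x]; simp only [Set.mem_setOf_eq]
            constructor
            · rintro ⟨h1, h2⟩
              apply max_le _ h2
              rcases lt_trichotomy (nu p k x) D with hx | hx | hx
              · exfalso
                have h5 : nu p k (x - xs) = nu p k x :=
                  nu_sub_of_lt_left hp hk (by rw [hnuxs]; exact hx)
                omega
              · omega
              · have h5 : nu p k (x - xs) = D := by
                  have := nu_sub_of_lt_right hp hk (x := x) (y := xs) (by rw [hnuxs]; exact hx)
                  rw [hnuxs] at this; exact this
                omega
            · intro h1
              have h5 : nu p k (x - xs) = D := by
                have := nu_sub_of_lt_right hp hk (x := x) (y := xs) (by rw [hnuxs]; omega)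
                rw [hnuxs] at this; exact this
              refine ⟨by omega, by omega⟩
          have hcardA : Nat.card ↑A = p^(k - max (K - D) hval) := by
            rw [hAeq2]; exact card_nu_ge hp hk (by omega)
          left
          refine ⟨k - max (K - D) hval, by omega, by rw [hcardA, hcardB]; omega⟩



end IsoCount

namespace IsoCount


variable {q : ℕ}

/-- lower unipotent [[1,0],[x,1]] as a unit -/
def lmat (x : ZMod q) : GL2 q :=
  ⟨!![1,0;x,1], !![1,0;-x,1], by
    ext i j; fin_cases i <;> fin_cases j <;>
      simp [Matrix.mul_apply, Fin.sum_univ_two], by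
    ext i j; fin_cases i <;> fin_cases j <;>
      simp [Matrix.mul_apply, Fin.sum_univ_two]⟩

/-- [[0,1],[1,c]] as a unit -/
def wmat (c : ZMod q) : GL2 q :=
  ⟨!![0,1;1,c], !![-c,1;1,0], by
    ext i j; fin_cases i <;> fin_cases j <;>
      simp [Matrix.mul_apply, Fin.sum_univ_two], by
    ext i j; fin_cases i <;> fin_cases j <;>
      simp [Matrix.mul_apply, Fin.sum_univ_two]⟩

lemma lmat_val (x : ZMod q) : (lmat x : Matrix (Fin 2) (Fin 2) (ZMod q)) = !![1,0;x,1] := rfl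
lemma lmat_inv_val (x : ZMod q) :
    ((lmat x)⁻¹ : GL2 q) = (⟨!![1,0;-x,1], !![1,0;x,1], (lmat (x := x)).inv_val, (lmat (x := x)).val_inv⟩ : (Matrix (Fin 2) (Fin 2) (ZMod q))ˣ) := rfl

example (x : ZMod q) : (((lmat x)⁻¹ : GL2 q) : Matrix (Fin 2) (Fin 2) (ZMod q)) = !![1,0;-x,1] := rfl

lemma B0_one : (1 : GL2 q) ∈ B0 q := by
  show ((1 : GL2 q) : Matrix (Fin 2) (Fin 2) (ZMod q)) 1 0 = 0
  simp [Units.val_one]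

lemma B0_mul {a b : GL2 q} (ha : a ∈ B0 q) (hb : b ∈ B0 q) : a * b ∈ B0 q := by
  show ((a * b : GL2 q) : Matrix (Fin 2) (Fin 2) (ZMod q)) 1 0 = 0
  rw [Units.val_mul, Matrix.mul_apply, Fin.sum_univ_two]
  rw [show ((a : Matrix (Fin 2) (Fin 2) (ZMod q)) 1 0 = 0) from ha,
    show ((b : Matrix (Fin 2) (Fin 2) (ZMod q)) 1 0 = 0) from hb]
  ring

lemma B0_inv {a : GL2 q} (ha : a ∈ B0 q) : a⁻¹ ∈ B0 q := by
  show ((a⁻¹ : GL2 q) : Matrix (Fin 2) (Fin 2) (ZMod q)) 1 0 = 0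
  rw [Matrix.coe_units_inv, Matrix.inv_def, Matrix.adjugate_fin_two]
  simp [show ((a : Matrix (Fin 2) (Fin 2) (ZMod q)) 1 0 = 0) from ha]

end IsoCount

namespace IsoCount

variable {q : ℕ}

lemma wmat_val (c : ZMod q) : (wmat c : Matrix (Fin 2) (Fin 2) (ZMod q)) = !![0,1;1,c] := rfl
lemma lmat_inv_coe (x : ZMod q) :
    (((lmat x)⁻¹ : GL2 q) : Matrix (Fin 2) (Fin 2) (ZMod q)) = !![1,0;-x,1] := rfl
lemma wmat_inv_coe (c : ZMod q) :
    (((wmat c)⁻¹ : GL2 q) : Matrix (Fin 2) (Fin 2) (ZMod q)) = !![-c,1;1,0] := rfl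

lemma conj_mem {b y : GL2 q} (hb : b ∈ B0 q) (hy : y ∈ B0 q) : b * y * b⁻¹ ∈ B0 q :=
  B0_mul (B0_mul hb hy) (B0_inv hb)

lemma conj_lmat_entry (x : ZMod q) (r : GL2 q) :
    ((lmat x * r * (lmat x)⁻¹ : GL2 q) : Matrix (Fin 2) (Fin 2) (ZMod q)) 1 0
    = (x * ((r : Matrix (Fin 2) (Fin 2) (ZMod q)) 0 0) + (r : Matrix (Fin 2) (Fin 2) (ZMod q)) 1 0)
      - x * (x * ((r : Matrix (Fin 2) (Fin 2) (ZMod q)) 0 1) + (r : Matrix (Fin 2) (Fin 2) (ZMod q)) 1 1) := by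
  rw [Units.val_mul, Units.val_mul, lmat_inv_coe, lmat_val]
  simp [Matrix.mul_apply, Matrix.vecMul, dotProduct, Fin.sum_univ_two]
  ring

lemma conj_wmat_entry (c : ZMod q) (r : GL2 q) :
    ((wmat c * r * (wmat c)⁻¹ : GL2 q) : Matrix (Fin 2) (Fin 2) (ZMod q)) 1 0
    = (r : Matrix (Fin 2) (Fin 2) (ZMod q)) 0 1 + c * ((r : Matrix (Fin 2) (Fin 2) (ZMod q)) 1 1)
      - c * ((r : Matrix (Fin 2) (Fin 2) (ZMod q)) 0 0)
      - c^2 * ((r : Matrix (Fin 2) (Fin 2) (ZMod q)) 1 0) := by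
  rw [Units.val_mul, Units.val_mul, wmat_inv_coe, wmat_val]
  simp [Matrix.mul_apply, Matrix.vecMul, dotProduct, Fin.sum_univ_two]
  ring

lemma lmat_mem_iff (x : ZMod q) (r : GL2 q)
    (hr : (r : Matrix (Fin 2) (Fin 2) (ZMod q)) 1 0 = 0) :
    (lmat x * r * (lmat x)⁻¹ ∈ B0 q)
      ↔ x * (((r : Matrix (Fin 2) (Fin 2) (ZMod q)) 0 1) * x
          - (((r : Matrix (Fin 2) (Fin 2) (ZMod q)) 0 0) - ((r : Matrix (Fin 2) (Fin 2) (ZMod q)) 1 1))) = 0 := by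
  show ((lmat x * r * (lmat x)⁻¹ : GL2 q) : Matrix (Fin 2) (Fin 2) (ZMod q)) 1 0 = 0 ↔ _
  rw [conj_lmat_entry, hr]
  constructor
  · intro h; linear_combination -h
  · intro h; linear_combination -h

lemma wmat_mem_iff (c : ZMod q) (r : GL2 q)
    (hr : (r : Matrix (Fin 2) (Fin 2) (ZMod q)) 1 0 = 0) :
    (wmat c * r * (wmat c)⁻¹ ∈ B0 q)
      ↔ (((r : Matrix (Fin 2) (Fin 2) (ZMod q)) 0 0) - ((r : Matrix (Fin 2) (Fin 2) (ZMod q)) 1 1)) * c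
          - ((r : Matrix (Fin 2) (Fin 2) (ZMod q)) 0 1) = 0 := by
  show ((wmat c * r * (wmat c)⁻¹ : GL2 q) : Matrix (Fin 2) (Fin 2) (ZMod q)) 1 0 = 0 ↔ _
  rw [conj_wmat_entry, hr]
  constructor
  · intro h; linear_combination -h
  · intro h; linear_combination -h

/-- the two affine fixed-point sets -/
def setA (R : Subgroup (GL2 q)) : Set (ZMod q) :=
  {x | ∀ r ∈ R, lmat x * r * (lmat x)⁻¹ ∈ B0 q}

def setB (R : Subgroup (GL2 q)) : Set (ZMod q) :=
  {c | ¬IsUnit c ∧ ∀ r ∈ R, wmat c * r * (wmat c)⁻¹ ∈ B0 q}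

end IsoCount

namespace IsoCount

variable {p k : ℕ}

lemma det_isUnit (g : GL2 q) : IsUnit ((g : Matrix (Fin 2) (Fin 2) (ZMod q)).det) :=
  (Matrix.isUnit_iff_isUnit_det _).mp g.isUnit

lemma b11_unit {b : GL2 q} (hb : b ∈ B0 q) :
    IsUnit ((b : Matrix (Fin 2) (Fin 2) (ZMod q)) 1 1) := by
  have hdet := det_isUnit b
  rw [Matrix.det_fin_two] at hdet
  rw [show ((b : Matrix (Fin 2) (Fin 2) (ZMod q)) 1 0 = 0) from hb, mul_zero, sub_zero] at hdet
  exact isUnit_of_mul_isUnit_right hdet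

lemma bottom_unit (hp : p.Prime) (hk : 0 < k) (g : GL2 (p^k))
    (h : ¬ IsUnit ((g : Matrix (Fin 2) (Fin 2) (ZMod (p^k))) 1 1)) :
    IsUnit ((g : Matrix (Fin 2) (Fin 2) (ZMod (p^k))) 1 0) := by
  by_contra h10
  set M := (g : Matrix (Fin 2) (Fin 2) (ZMod (p^k))) with hM
  have hdet := det_isUnit g
  rw [Matrix.det_fin_two] at hdet
  have h1 : 1 ≤ nu p k (M 1 1) := (not_isUnit_iff_nu hp hk _).mp h
  have h2 : 1 ≤ nu p k (M 1 0) := (not_isUnit_iff_nu hp hk _).mp h10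
  have h3 := nu_mul hp hk (M 0 0) (M 1 1)
  have h4 := nu_mul hp hk (M 0 1) (M 1 0)
  have h5 := min_le_nu_add (p := p) (k := k) (M 0 0 * M 1 1) (-(M 0 1 * M 1 0))
  rw [nu_neg hp hk] at h5
  have h6 : M 0 0 * M 1 1 + -(M 0 1 * M 1 0) = M 0 0 * M 1 1 - M 0 1 * M 1 0 := by ring
  rw [h6] at h5
  have h7 : 1 ≤ nu p k (M 0 0 * M 1 1 - M 0 1 * M 1 0) := by omega
  exact ((not_isUnit_iff_nu hp hk _).mpr h7) hdet

lemma mulL_e10 (b : GL2 q) (hb : b ∈ B0 q) (x : ZMod q) :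
    ((b * lmat x : GL2 q) : Matrix (Fin 2) (Fin 2) (ZMod q)) 1 0
      = (b : Matrix (Fin 2) (Fin 2) (ZMod q)) 1 1 * x := by
  rw [Units.val_mul, lmat_val]
  simp [Matrix.mul_apply, Fin.sum_univ_two,
    show ((b : Matrix (Fin 2) (Fin 2) (ZMod q)) 1 0 = 0) from hb]

lemma mulL_e11 (b : GL2 q) (hb : b ∈ B0 q) (x : ZMod q) :
    ((b * lmat x : GL2 q) : Matrix (Fin 2) (Fin 2) (ZMod q)) 1 1
      = (b : Matrix (Fin 2) (Fin 2) (ZMod q)) 1 1 := by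
  rw [Units.val_mul, lmat_val]
  simp [Matrix.mul_apply, Fin.sum_univ_two,
    show ((b : Matrix (Fin 2) (Fin 2) (ZMod q)) 1 0 = 0) from hb]

lemma mulW_e10 (b : GL2 q) (hb : b ∈ B0 q) (c : ZMod q) :
    ((b * wmat c : GL2 q) : Matrix (Fin 2) (Fin 2) (ZMod q)) 1 0
      = (b : Matrix (Fin 2) (Fin 2) (ZMod q)) 1 1 := by
  rw [Units.val_mul, wmat_val]
  simp [Matrix.mul_apply, Fin.sum_univ_two,
    show ((b : Matrix (Fin 2) (Fin 2) (ZMod q)) 1 0 = 0) from hb]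

lemma mulW_e11 (b : GL2 q) (hb : b ∈ B0 q) (c : ZMod q) :
    ((b * wmat c : GL2 q) : Matrix (Fin 2) (Fin 2) (ZMod q)) 1 1
      = (b : Matrix (Fin 2) (Fin 2) (ZMod q)) 1 1 * c := by
  rw [Units.val_mul, wmat_val]
  simp [Matrix.mul_apply, Fin.sum_univ_two,
    show ((b : Matrix (Fin 2) (Fin 2) (ZMod q)) 1 0 = 0) from hb]

end IsoCount

namespace IsoCount

variable {p k : ℕ}

lemma mul_lmatinv_e10 (g : GL2 q) (x : ZMod q) :
    ((g * (lmat x)⁻¹ : GL2 q) : Matrix (Fin 2) (Fin 2) (ZMod q)) 1 0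
      = (g : Matrix (Fin 2) (Fin 2) (ZMod q)) 1 0
        - (g : Matrix (Fin 2) (Fin 2) (ZMod q)) 1 1 * x := by
  rw [Units.val_mul, lmat_inv_coe]
  simp [Matrix.mul_apply, Fin.sum_univ_two]
  ring

lemma mul_wmatinv_e10 (g : GL2 q) (c : ZMod q) :
    ((g * (wmat c)⁻¹ : GL2 q) : Matrix (Fin 2) (Fin 2) (ZMod q)) 1 0
      = (g : Matrix (Fin 2) (Fin 2) (ZMod q)) 1 1
        - (g : Matrix (Fin 2) (Fin 2) (ZMod q)) 1 0 * c := by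
  rw [Units.val_mul, wmat_inv_coe]
  simp [Matrix.mul_apply, Fin.sum_univ_two]
  ring

lemma conj_conj {G : Type*} [Group G] (b n r : G) :
    (b*n)*r*(b*n)⁻¹ = b*(n*r*n⁻¹)*b⁻¹ := by group

lemma conj_conj2 {G : Type*} [Group G] (b n r : G) :
    n*r*n⁻¹ = b⁻¹ * ((b*n)*r*(b*n)⁻¹) * (b⁻¹)⁻¹ := by group

lemma key_card (hp : p.Prime) (hk : 0 < k) (R : Subgroup (GL2 (p^k))) :
    Nat.card {g : GL2 (p^k) | ∀ r ∈ R, g * r * g⁻¹ ∈ B0 (p^k)}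
      = (Nat.card ↥(setA R) + Nat.card ↥(setB R)) * Nat.card ↥(B0 (p^k)) := by
  haveI : NeZero (p^k) := ⟨(pk_pos hp).ne'⟩
  classical
  have hmem1 : ∀ (b : ↥(B0 (p^k))) (x : ↥(setA R)),
      ((b : GL2 (p^k)) * lmat (x : ZMod (p^k)) : GL2 (p^k))
        ∈ {g : GL2 (p^k) | ∀ r ∈ R, g * r * g⁻¹ ∈ B0 (p^k)} := by
    intro b x r hr
    rw [conj_conj]
    exact conj_mem b.2 (x.2 r hr)
  have hmem2 : ∀ (b : ↥(B0 (p^k))) (c : ↥(setB R)),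
      ((b : GL2 (p^k)) * wmat (c : ZMod (p^k)) : GL2 (p^k))
        ∈ {g : GL2 (p^k) | ∀ r ∈ R, g * r * g⁻¹ ∈ B0 (p^k)} := by
    intro b c r hr
    rw [conj_conj]
    exact conj_mem b.2 (c.2.2 r hr)
  let f : ↥(B0 (p^k)) × (↥(setA R) ⊕ ↥(setB R))
      → ↥{g : GL2 (p^k) | ∀ r ∈ R, g * r * g⁻¹ ∈ B0 (p^k)} := fun bz =>
    bz.2.elim (fun (x : ↥(setA R)) => ⟨(bz.1 : GL2 (p^k)) * lmat (x : ZMod (p^k)), hmem1 bz.1 x⟩)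
      (fun (c : ↥(setB R)) => ⟨(bz.1 : GL2 (p^k)) * wmat (c : ZMod (p^k)), hmem2 bz.1 c⟩)
  have hbij : Function.Bijective f := by
    constructor
    · rintro ⟨b₁, z₁⟩ ⟨b₂, z₂⟩ h
      rcases z₁ with x₁ | c₁ <;> rcases z₂ with x₂ | c₂ <;>
        simp only [f, Sum.elim_inl, Sum.elim_inr, Subtype.mk.injEq] at h
      · -- inl inl
        have h11 := congrArg (fun g : GL2 (p^k) => (g : Matrix (Fin 2) (Fin 2) (ZMod (p^k))) 1 1) h
        simp only [mulL_e11 _ b₁.2, mulL_e11 _ b₂.2] at h11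
        have h10 := congrArg (fun g : GL2 (p^k) => (g : Matrix (Fin 2) (Fin 2) (ZMod (p^k))) 1 0) h
        simp only [mulL_e10 _ b₁.2, mulL_e10 _ b₂.2] at h10
        have hu := b11_unit b₁.2
        have hx : (↑x₁ : ZMod (p^k)) = ↑x₂ := by
          obtain ⟨u, hu⟩ := hu
          rw [← h11] at h10
          have := congrArg (fun y => (↑u⁻¹ : ZMod (p^k)) * y) h10
          simpa [← hu, ← mul_assoc] using this
        have hb : b₁ = b₂ := by
          apply Subtype.ext
          have : (b₁ : GL2 (p^k)) * lmat (x₁ : ZMod (p^k)) = (b₂ : GL2 (p^k)) * lmat (x₁ : ZMod (p^k)) := by rw [h, hx]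
          exact mul_right_cancel this
        rw [hb, Subtype.ext hx]
      · -- inl inr : impossible
        exfalso
        have h11 := congrArg (fun g : GL2 (p^k) => (g : Matrix (Fin 2) (Fin 2) (ZMod (p^k))) 1 1) h
        simp only [mulL_e11 _ b₁.2, mulW_e11 _ b₂.2] at h11
        have := b11_unit b₁.2
        rw [h11] at this
        exact c₂.2.1 (isUnit_of_mul_isUnit_right this)
      · -- inr inl : impossible
        exfalso
        have h11 := congrArg (fun g : GL2 (p^k) => (g : Matrix (Fin 2) (Fin 2) (ZMod (p^k))) 1 1) h
        simp only [mulW_e11 _ b₁.2, mulL_e11 _ b₂.2] at h11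
        have := b11_unit b₂.2
        rw [← h11] at this
        exact c₁.2.1 (isUnit_of_mul_isUnit_right this)
      · -- inr inr
        have h10 := congrArg (fun g : GL2 (p^k) => (g : Matrix (Fin 2) (Fin 2) (ZMod (p^k))) 1 0) h
        simp only [mulW_e10 _ b₁.2, mulW_e10 _ b₂.2] at h10
        have h11 := congrArg (fun g : GL2 (p^k) => (g : Matrix (Fin 2) (Fin 2) (ZMod (p^k))) 1 1) h
        simp only [mulW_e11 _ b₁.2, mulW_e11 _ b₂.2] at h11
        have hu := b11_unit b₁.2
        have hc : (↑c₁ : ZMod (p^k)) = ↑c₂ := by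
          obtain ⟨u, hu⟩ := hu
          rw [← h10] at h11
          have := congrArg (fun y => (↑u⁻¹ : ZMod (p^k)) * y) h11
          simpa [← hu, ← mul_assoc] using this
        have hb : b₁ = b₂ := by
          apply Subtype.ext
          have : (b₁ : GL2 (p^k)) * wmat (c₁ : ZMod (p^k)) = (b₂ : GL2 (p^k)) * wmat (c₁ : ZMod (p^k)) := by rw [h, hc]
          exact mul_right_cancel this
        rw [hb, Subtype.ext hc]
    · rintro ⟨g, hg⟩
      by_cases hu : IsUnit ((g : Matrix (Fin 2) (Fin 2) (ZMod (p^k))) 1 1)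
      · obtain ⟨u, hu⟩ := hu
        set x := (g : Matrix (Fin 2) (Fin 2) (ZMod (p^k))) 1 0 * ↑u⁻¹ with hx
        set b := g * (lmat x)⁻¹ with hbdef
        have hgb : b * lmat x = g := by rw [hbdef, inv_mul_cancel_right]
        have huu : (↑u : ZMod (p^k)) * ↑u⁻¹ = 1 := Units.mul_inv u
        have hbB : b ∈ B0 (p^k) := by
          show ((b : GL2 (p^k)) : Matrix (Fin 2) (Fin 2) (ZMod (p^k))) 1 0 = 0
          rw [hbdef, mul_lmatinv_e10, hx, ← hu]
          linear_combination (-((g : Matrix (Fin 2) (Fin 2) (ZMod (p^k))) 1 0)) * huu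
        have hxA : x ∈ setA R := by
          intro r hr
          rw [conj_conj2 b (lmat x) r, hgb]
          exact conj_mem (B0_inv hbB) (hg r hr)
        exact ⟨(⟨b, hbB⟩, Sum.inl ⟨x, hxA⟩), Subtype.ext hgb⟩
      · have hu10 := bottom_unit hp hk g hu
        obtain ⟨u, hu10⟩ := hu10
        set c := (g : Matrix (Fin 2) (Fin 2) (ZMod (p^k))) 1 1 * ↑u⁻¹ with hc
        have hcnu : ¬ IsUnit c := by
          intro hcu
          apply hu
          have : (g : Matrix (Fin 2) (Fin 2) (ZMod (p^k))) 1 1 = c * ↑u := by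
            rw [hc, mul_assoc, Units.inv_mul, mul_one]
          rw [this]
          exact hcu.mul u.isUnit
        set b := g * (wmat c)⁻¹ with hbdef
        have hgb : b * wmat c = g := by rw [hbdef, inv_mul_cancel_right]
        have huu : (↑u : ZMod (p^k)) * ↑u⁻¹ = 1 := Units.mul_inv u
        have hbB : b ∈ B0 (p^k) := by
          show ((b : GL2 (p^k)) : Matrix (Fin 2) (Fin 2) (ZMod (p^k))) 1 0 = 0
          rw [hbdef, mul_wmatinv_e10, hc, ← hu10]
          linear_combination (-((g : Matrix (Fin 2) (Fin 2) (ZMod (p^k))) 1 1)) * huu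
        have hcB : c ∈ setB R := by
          refine ⟨hcnu, fun r hr => ?_⟩
          rw [conj_conj2 b (wmat c) r, hgb]
          exact conj_mem (B0_inv hbB) (hg r hr)
        exact ⟨(⟨b, hbB⟩, Sum.inr ⟨c, hcB⟩), Subtype.ext hgb⟩
  rw [← Nat.card_congr (Equiv.ofBijective f hbij), Nat.card_prod, Nat.card_sum]
  ring

end IsoCount

namespace IsoCount

variable {p k : ℕ}

lemma conjCount_map (u : GL2 q) (R : Subgroup (GL2 q)) :
    conjCount (B0 q) (Subgroup.map (MulAut.conj u).toMonoidHom R) = conjCount (B0 q) R := by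
  unfold conjCount
  apply Nat.card_congr
  refine (Equiv.mulRight u).subtypeEquiv ?_
  intro g
  simp only [Set.mem_setOf_eq, Equiv.coe_mulRight]
  constructor
  · intro hg r hr
    have hmem : u * r * u⁻¹ ∈ Subgroup.map (MulAut.conj u).toMonoidHom R := by
      exact ⟨r, hr, rfl⟩
    have := hg (u * r * u⁻¹) hmem
    have heq : g * (u * r * u⁻¹) * g⁻¹ = (g*u) * r * (g*u)⁻¹ := by group
    rwa [heq] at this
  · intro hg r' hr'
    obtain ⟨r, hr, rfl⟩ := hr'
    have := hg r hr
    have heq : g * ((MulAut.conj u).toMonoidHom r) * g⁻¹ = (g*u) * r * (g*u)⁻¹ := by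
      simp only [MulEquiv.coe_toMonoidHom, MulAut.conj_apply]
      group
    rwa [heq]

/-- the module of (α,β) data attached to a subgroup of the Borel -/
def Nmod (R' : Subgroup (GL2 q)) : Submodule (ZMod q) (ZMod q × ZMod q) :=
  Submodule.span (ZMod q)
    {ab | ∃ r ∈ R', ab = (((r : GL2 q) : Matrix (Fin 2) (Fin 2) (ZMod q)) 0 0
        - ((r : GL2 q) : Matrix (Fin 2) (Fin 2) (ZMod q)) 1 1,
      ((r : GL2 q) : Matrix (Fin 2) (Fin 2) (ZMod q)) 0 1)}

lemma setA_span (R' : Subgroup (GL2 q))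
    (hR' : ∀ r ∈ R', ((r : GL2 q) : Matrix (Fin 2) (Fin 2) (ZMod q)) 1 0 = 0) :
    setA R' = {x : ZMod q | ∀ g ∈ Nmod R', x * (g.2 * x - g.1) = 0} := by
  ext x
  simp only [setA, Set.mem_setOf_eq]
  constructor
  · intro hx g hg
    refine Submodule.span_induction ?_ ?_ ?_ ?_ hg
    · rintro ab ⟨r, hr, rfl⟩
      have := (lmat_mem_iff x r (hR' r hr)).mp (hx r hr)
      simpa using this
    · simp
    · intro a b _ _ pa pb
      have : x * ((a + b).2 * x - (a + b).1)
          = x * (a.2 * x - a.1) + x * (b.2 * x - b.1) := by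
        simp only [Prod.snd_add, Prod.fst_add]; ring
      rw [this, pa, pb, add_zero]
    · intro c a _ pa
      have : x * ((c • a).2 * x - (c • a).1) = c * (x * (a.2 * x - a.1)) := by
        simp only [Prod.smul_snd, Prod.smul_fst, smul_eq_mul]; ring
      rw [this, pa, mul_zero]
  · intro hx r hr
    rw [lmat_mem_iff x r (hR' r hr)]
    have hgen := hx _ (Submodule.subset_span ⟨r, hr, rfl⟩)
    simpa using hgen

lemma setB_span (R' : Subgroup (GL2 q))
    (hR' : ∀ r ∈ R', ((r : GL2 q) : Matrix (Fin 2) (Fin 2) (ZMod q)) 1 0 = 0) :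
    setB R' = {c : ZMod q | ¬IsUnit c ∧ ∀ g ∈ Nmod R', g.1 * c - g.2 = 0} := by
  ext x
  simp only [setB, Set.mem_setOf_eq]
  constructor
  · rintro ⟨hxu, hx⟩
    refine ⟨hxu, fun g hg => ?_⟩
    refine Submodule.span_induction ?_ ?_ ?_ ?_ hg
    · rintro ab ⟨r, hr, rfl⟩
      have := (wmat_mem_iff x r (hR' r hr)).mp (hx r hr)
      simpa using this
    · simp
    · intro a b _ _ pa pb
      have : (a + b).1 * x - (a + b).2 = (a.1 * x - a.2) + (b.1 * x - b.2) := by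
        simp only [Prod.snd_add, Prod.fst_add]; ring
      rw [this, pa, pb, add_zero]
    · intro c a _ pa
      have : (c • a).1 * x - (c • a).2 = c * (a.1 * x - a.2) := by
        simp only [Prod.smul_snd, Prod.smul_fst, smul_eq_mul]; ring
      rw [this, pa, mul_zero]
  · rintro ⟨hxu, hx⟩
    refine ⟨hxu, fun r hr => ?_⟩
    rw [wmat_mem_iff x r (hR' r hr)]
    have hgen := hx _ (Submodule.subset_span ⟨r, hr, rfl⟩)
    simpa using hgen

lemma B0_card_pos (hp : p.Prime) (hk : 0 < k) : 0 < Nat.card ↥(B0 (p^k)) := by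
  haveI : NeZero (p^k) := ⟨(pk_pos hp).ne'⟩
  haveI : Nonempty ↥(B0 (p^k)) := ⟨⟨1, B0_one⟩⟩
  exact Nat.card_pos

lemma finish (hp : p.Prime) (hk : 0 < k) (R : Subgroup (GL2 (p^k))) (u : GL2 (p^k))
    (hconj : ∀ r ∈ R, u * r * u⁻¹ ∈ B0 (p^k)) (m : ℕ)
    (hm : conjCount (B0 (p^k)) R = m * Nat.card ↥(B0 (p^k))) :
    (∃ j < k, m = p^j) ∨ (∃ j < k, m = 2*p^j) ∨ m = p^k + p^(k-1) := by
  haveI : NeZero (p^k) := ⟨(pk_pos hp).ne'⟩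
  set R' := Subgroup.map (MulAut.conj u).toMonoidHom R with hR'def
  have hR'B : ∀ r' ∈ R', ((r' : GL2 (p^k)) : Matrix (Fin 2) (Fin 2) (ZMod (p^k))) 1 0 = 0 := by
    rintro r' ⟨r, hr, rfl⟩
    exact hconj r hr
  have hinv := conjCount_map u R
  have hkey := key_card hp hk R'
  have hm' : m = Nat.card ↥(setA R') + Nat.card ↥(setB R') := by
    apply Nat.eq_of_mul_eq_mul_right (B0_card_pos hp hk)
    rw [← hm, ← hinv]
    show conjCount (B0 (p^k)) R' = _
    unfold conjCount
    rw [hkey]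
  rw [setA_span R' hR'B, setB_span R' hR'B] at hm'
  have hmain := main_count hp hk (Nmod R')
  rcases hmain with ⟨j, hj, he⟩ | ⟨j, hj, he⟩ | he
  · exact Or.inl ⟨j, hj, by rw [hm', he]⟩
  · exact Or.inr (Or.inl ⟨j, hj, by rw [hm', he]⟩)
  · exact Or.inr (Or.inr (by rw [hm', he]))

end IsoCount

theorem number_of_isogenies_upper_bound
    (p k : ℕ) (hp : p.Prime) (hodd : Odd p) (hk : 0 < k) :
    Sset (B0 (p ^ k)) ⊆
      {0} ∪ {m | ∃ j < k, m = p ^ j} ∪ {m | ∃ j < k, m = 2 * p ^ j}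
        ∪ {p ^ k + p ^ (k - 1)} := by
  intro m hm
  obtain ⟨R, hR⟩ := hm
  haveI : NeZero (p^k) := ⟨(IsoCount.pk_pos hp).ne'⟩
  have hcard : Nat.card ↥(B0 (p^k)) = Nat.card (B0 (p^k)) := rfl
  have hm_eq : m = Nat.card ↥(IsoCount.setA R) + Nat.card ↥(IsoCount.setB R) := by
    apply Nat.eq_of_mul_eq_mul_right (IsoCount.B0_card_pos hp hk)
    rw [← hR]
    unfold conjCount
    rw [IsoCount.key_card hp hk R]
  simp only [Set.mem_union, Set.mem_setOf_eq, Set.mem_singleton_iff]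
  by_cases hA : 0 < Nat.card ↥(IsoCount.setA R)
  · obtain ⟨x₀, hx₀⟩ := (Nat.card_pos_iff.mp hA).1
    have hfin := IsoCount.finish hp hk R (IsoCount.lmat x₀) (fun r hr => hx₀ r hr) m hR
    rcases hfin with ⟨j, hj, he⟩ | ⟨j, hj, he⟩ | he
    · exact Or.inl (Or.inl (Or.inr ⟨j, hj, he⟩))
    · exact Or.inl (Or.inr ⟨j, hj, he⟩)
    · exact Or.inr he
  · by_cases hB : 0 < Nat.card ↥(IsoCount.setB R)
    · obtain ⟨c₀, hc₀⟩ := (Nat.card_pos_iff.mp hB).1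
      have hfin := IsoCount.finish hp hk R (IsoCount.wmat c₀) (fun r hr => hc₀.2 r hr) m hR
      rcases hfin with ⟨j, hj, he⟩ | ⟨j, hj, he⟩ | he
      · exact Or.inl (Or.inl (Or.inr ⟨j, hj, he⟩))
      · exact Or.inl (Or.inr ⟨j, hj, he⟩)
      · exact Or.inr he
    · left; left; left
      omega
end

section
/- Let p be an odd prime and k a positive integer, and let G = GL₂(ℤ/p^kℤ). For every m in the set {0} ∪ {p^j : 0 ≤ j < k} ∪ {2p^j : 0 ≤ j < k} ∪ {p^k + p^{k-1}} there exists a subgroup R of G such that #{g ∈ G : gRg⁻¹ ⊆ B₀(p^k)} = m · #B₀(p^k). Equivalently, {0} ∪ {p^j : 0 ≤ j < k} ∪ {2p^j : 0 ≤ j < k} ∪ {p^k + p^{k-1}} ⊆ S(B₀(p^k)). -/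
open Matrix

namespace NOIAux

noncomputable section

open scoped Classical

variable {n : ℕ}

/-- Build an element of `GL2 n` from a matrix with unit determinant. -/
def mkGL (A : Matrix (Fin 2) (Fin 2) (ZMod n)) (h : IsUnit A.det) : GL2 n :=
  Matrix.nonsingInvUnit A h

@[simp] lemma coe_mkGL (A : Matrix (Fin 2) (Fin 2) (ZMod n)) (h : IsUnit A.det) :
    ((mkGL A h : GL2 n) : Matrix (Fin 2) (Fin 2) (ZMod n)) = A := rfl

/-- The unimodular pairs. -/
abbrev Um (n : ℕ) : Type := {w : ZMod n × ZMod n // IsUnit w.1 ∨ IsUnit w.2}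

lemma unit_cancel {R : Type*} [CommRing R] (u : Rˣ) {a b : R} (h : a * u = b * u) : a = b := by
  have h2 := congrArg (fun t => t * (↑u⁻¹ : R)) h
  simpa [mul_assoc] using h2

/-- `B0 n` is a subgroup. -/
def B0sub (n : ℕ) [NeZero n] : Subgroup (GL2 n) where
  carrier := B0 n
  one_mem' := by
    show ((1 : GL2 n) : Matrix (Fin 2) (Fin 2) (ZMod n)) 1 0 = 0
    simp [Matrix.one_apply]
  mul_mem' := by
    intro a b ha hb
    show ((a * b : GL2 n) : Matrix (Fin 2) (Fin 2) (ZMod n)) 1 0 = 0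
    have ha' : (a : Matrix (Fin 2) (Fin 2) (ZMod n)) 1 0 = 0 := ha
    have hb' : (b : Matrix (Fin 2) (Fin 2) (ZMod n)) 1 0 = 0 := hb
    rw [Units.val_mul, Matrix.mul_apply, Fin.sum_univ_two, ha', hb']
    ring
  inv_mem' := by
    intro a ha
    show ((a⁻¹ : GL2 n) : Matrix (Fin 2) (Fin 2) (ZMod n)) 1 0 = 0
    have ha' : (a : Matrix (Fin 2) (Fin 2) (ZMod n)) 1 0 = 0 := ha
    rw [Matrix.coe_units_inv, Matrix.inv_def, Matrix.adjugate_fin_two]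
    simp [ha']

@[simp] lemma mem_B0sub [NeZero n] (g : GL2 n) : g ∈ B0sub n ↔ g ∈ B0 n := Iff.rfl

/-- The parametrization map. -/
def psi (x : Um n × (ZMod n)ˣ × ZMod n) : GL2 n :=
  if h : IsUnit x.1.1.2 then
    mkGL !![↑x.2.1 + x.2.2 * x.1.1.1, x.2.2 * x.1.1.2; x.1.1.1, x.1.1.2]
      (by
        rw [Matrix.det_fin_two_of]
        have he : (↑x.2.1 + x.2.2 * x.1.1.1) * x.1.1.2 - x.2.2 * x.1.1.2 * x.1.1.1
            = ↑x.2.1 * x.1.1.2 := by ring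
        rw [he]
        exact x.2.1.isUnit.mul h)
  else
    mkGL !![x.2.2 * x.1.1.1, -↑x.2.1 + x.2.2 * x.1.1.2; x.1.1.1, x.1.1.2]
      (by
        have hc : IsUnit x.1.1.1 := x.1.2.resolve_right h
        rw [Matrix.det_fin_two_of]
        have he : x.2.2 * x.1.1.1 * x.1.1.2 - (-↑x.2.1 + x.2.2 * x.1.1.2) * x.1.1.1
            = ↑x.2.1 * x.1.1.1 := by ring
        rw [he]
        exact x.2.1.isUnit.mul hc)

lemma psi_row (x : Um n × (ZMod n)ˣ × ZMod n) :
    ((psi x : GL2 n) : Matrix (Fin 2) (Fin 2) (ZMod n)) 1 0 = x.1.1.1 ∧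
    ((psi x : GL2 n) : Matrix (Fin 2) (Fin 2) (ZMod n)) 1 1 = x.1.1.2 := by
  unfold psi
  split <;> exact ⟨rfl, rfl⟩

lemma psi_injective : Function.Injective (psi (n := n)) := by
  intro x y hxy
  have hmat : ((psi x : GL2 n) : Matrix (Fin 2) (Fin 2) (ZMod n))
      = ((psi y : GL2 n) : Matrix (Fin 2) (Fin 2) (ZMod n)) := by rw [hxy]
  have hc : x.1.1.1 = y.1.1.1 := by
    rw [← (psi_row x).1, ← (psi_row y).1, hmat]
  have hd : x.1.1.2 = y.1.1.2 := by
    rw [← (psi_row x).2, ← (psi_row y).2, hmat]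
  have hw : x.1 = y.1 := Subtype.ext (Prod.ext hc hd)
  obtain ⟨⟨⟨c, d⟩, hu⟩, α, β⟩ := x
  obtain ⟨⟨⟨c', d'⟩, hu'⟩, α', β'⟩ := y
  simp only [Subtype.mk.injEq, Prod.mk.injEq] at hw hc hd
  subst hc hd
  simp only [Prod.mk.injEq, Subtype.mk.injEq, true_and]
  unfold psi at hmat
  by_cases h : IsUnit d
  · simp only [h, dif_pos] at hmat
    simp only [coe_mkGL] at hmat
    have h01 : β * d = β' * d := by
      have := congrFun (congrFun hmat 0) 1
      simpa using this
    have hβ : β = β' := by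
      obtain ⟨ud, hud⟩ := h
      subst hud
      exact unit_cancel ud h01
    have h00 : (↑α : ZMod n) + β * c = ↑α' + β' * c := by
      have := congrFun (congrFun hmat 0) 0
      simpa using this
    have hα : α = α' := by
      apply Units.ext
      rw [hβ] at h00
      exact add_right_cancel h00
    exact ⟨hα, hβ⟩
  · simp only [h, dif_neg, not_false_iff] at hmat
    simp only [coe_mkGL] at hmat
    have hcu : IsUnit c := hu.resolve_right h
    have h00 : β * c = β' * c := by
      have := congrFun (congrFun hmat 0) 0
      simpa using this
    have hβ : β = β' := by
      obtain ⟨uc, huc⟩ := hcu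
      subst huc
      exact unit_cancel uc h00
    have h01 : -(↑α : ZMod n) + β * d = -↑α' + β' * d := by
      have := congrFun (congrFun hmat 0) 1
      simpa using this
    have hα : α = α' := by
      apply Units.ext
      rw [hβ] at h01
      have := add_right_cancel h01
      exact neg_injective this
    exact ⟨hα, hβ⟩

lemma psi_surjective
    (hl : ∀ a b : ZMod n, IsUnit (a + b) → IsUnit a ∨ IsUnit b) :
    Function.Surjective (psi (n := n)) := by
  intro g
  set A : Matrix (Fin 2) (Fin 2) (ZMod n) := (g : Matrix (Fin 2) (Fin 2) (ZMod n)) with hA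
  have hdet : IsUnit A.det := (Matrix.isUnit_iff_isUnit_det _).mp g.isUnit
  have hdet2 : A.det = A 0 0 * A 1 1 - A 0 1 * A 1 0 := Matrix.det_fin_two A
  have hum : IsUnit (A 1 0) ∨ IsUnit (A 1 1) := by
    have h1 : IsUnit (A 0 0 * A 1 1 + -(A 0 1 * A 1 0)) := by
      rw [← sub_eq_add_neg, ← hdet2]; exact hdet
    rcases hl _ _ h1 with h | h
    · exact Or.inr (isUnit_of_mul_isUnit_right h)
    · have h2 := h.neg
      rw [neg_neg] at h2
      exact Or.inl (isUnit_of_mul_isUnit_right h2)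
  by_cases h : IsUnit (A 1 1)
  · obtain ⟨ud, hud⟩ := id h
    refine ⟨⟨⟨(A 1 0, A 1 1), hum⟩, hdet.unit * ud⁻¹, A 0 1 * ↑ud⁻¹⟩, ?_⟩
    have hdud : A 1 1 * (↑ud⁻¹ : ZMod n) = 1 := by rw [← hud]; exact ud.mul_inv
    unfold psi
    rw [dif_pos h]
    apply Units.ext
    rw [coe_mkGL]
    ext i j
    fin_cases i <;> fin_cases j <;>
      simp only [Matrix.of_apply, Matrix.cons_val', Matrix.cons_val_zero, Matrix.cons_val_one,
        Matrix.head_cons, Matrix.empty_val', Matrix.cons_val_fin_one, Matrix.head_fin_const,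
        Fin.isValue, Fin.zero_eta, Fin.mk_one, Units.val_mul, IsUnit.unit_spec]
    · linear_combination A 0 0 * hdud + (↑ud⁻¹ : ZMod n) * hdet2
    · linear_combination A 0 1 * hdud
    · rfl
    · rfl
  · have hcu : IsUnit (A 1 0) := hum.resolve_right h
    obtain ⟨uc, huc⟩ := id hcu
    refine ⟨⟨⟨(A 1 0, A 1 1), hum⟩, hdet.unit * uc⁻¹, A 0 0 * ↑uc⁻¹⟩, ?_⟩
    have hcuc : A 1 0 * (↑uc⁻¹ : ZMod n) = 1 := by rw [← huc]; exact uc.mul_inv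
    unfold psi
    rw [dif_neg h]
    apply Units.ext
    rw [coe_mkGL]
    ext i j
    fin_cases i <;> fin_cases j <;>
      simp only [Matrix.of_apply, Matrix.cons_val', Matrix.cons_val_zero, Matrix.cons_val_one,
        Matrix.head_cons, Matrix.empty_val', Matrix.cons_val_fin_one, Matrix.head_fin_const,
        Fin.isValue, Fin.zero_eta, Fin.mk_one, Units.val_mul, IsUnit.unit_spec]
    · linear_combination A 0 0 * hcuc
    · linear_combination A 0 1 * hcuc - (↑uc⁻¹ : ZMod n) * hdet2
    · rfl
    · rfl

/-- The master counting lemma. -/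
lemma master [NeZero n]
    (hl : ∀ a b : ZMod n, IsUnit (a + b) → IsUnit a ∨ IsUnit b)
    (P : ZMod n × ZMod n → Prop) :
    Nat.card {g : GL2 n | P ((g : Matrix (Fin 2) (Fin 2) (ZMod n)) 1 0,
        (g : Matrix (Fin 2) (Fin 2) (ZMod n)) 1 1)} =
    Nat.card {w : Um n // P w.1} * (Nat.card (ZMod n)ˣ * n) := by
  have hb : Function.Bijective (psi (n := n)) := ⟨psi_injective, psi_surjective hl⟩
  let e : (Um n × (ZMod n)ˣ × ZMod n) ≃ GL2 n := Equiv.ofBijective _ hb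
  have key : {g : GL2 n | P ((g : Matrix (Fin 2) (Fin 2) (ZMod n)) 1 0,
      (g : Matrix (Fin 2) (Fin 2) (ZMod n)) 1 1)} ≃ {x : Um n × (ZMod n)ˣ × ZMod n // P x.1.1} := by
    refine (Equiv.subtypeEquiv e.symm ?_)
    intro g
    have hg : psi (e.symm g) = g := e.apply_symm_apply g
    rw [← hg]
    show P (_, _) ↔ _
    rw [(psi_row (e.symm g)).1, (psi_row (e.symm g)).2, hg]
  have key2 : {x : Um n × (ZMod n)ˣ × ZMod n // P x.1.1} ≃
      {w : Um n // P w} × ((ZMod n)ˣ × ZMod n) :=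
    { toFun := fun x => (⟨x.1.1, x.2⟩, x.1.2)
      invFun := fun x => ⟨(x.1.1, x.2), x.1.2⟩
      left_inv := fun x => rfl
      right_inv := fun x => rfl }
  rw [Nat.card_congr (key.trans key2), Nat.card_prod, Nat.card_prod, Nat.card_zmod]


/-! ### Counting helpers -/

lemma mul_unit_eq_zero {u : (ZMod n)ˣ} {a : ZMod n} (h : a * u = 0) : a = 0 := by
  have h2 : a * ↑u = 0 * ↑u := by rw [h, zero_mul]
  exact unit_cancel u h2

lemma card_isUnit_subtype [NeZero n] :
    Nat.card {x : ZMod n // IsUnit x} = Nat.card (ZMod n)ˣ := by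
  have e1 : {x : ZMod n // IsUnit x} ≃ {x : ZMod n // x.val.Coprime n} := by
    refine Equiv.subtypeEquivRight fun x => ?_
    have hx : ((x.val : ℕ) : ZMod n) = x := ZMod.natCast_rightInverse x
    conv_lhs => rw [← hx]
    exact ZMod.isUnit_iff_coprime _ _
  rw [Nat.card_congr e1, Nat.card_congr (ZMod.unitsEquivCoprime (n := n)).symm]

lemma card_not_isUnit_subtype [NeZero n] :
    Nat.card {x : ZMod n // ¬ IsUnit x} = n - Nat.card (ZMod n)ˣ := by
  rw [← card_isUnit_subtype]
  rw [Nat.card_eq_fintype_card, Nat.card_eq_fintype_card]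
  rw [Fintype.card_subtype_compl]
  congr 1
  rw [ZMod.card]

/-- Decomposition of all unimodular pairs. -/
def umEquiv (n : ℕ) : Um n ≃
    ({x : ZMod n // IsUnit x} × ZMod n) ⊕ ({x : ZMod n // ¬ IsUnit x} × {x : ZMod n // IsUnit x}) where
  toFun w := if h : IsUnit w.1.1 then Sum.inl (⟨w.1.1, h⟩, w.1.2)
    else Sum.inr (⟨w.1.1, h⟩, ⟨w.1.2, w.2.resolve_left h⟩)
  invFun x := x.elim (fun y => ⟨(y.1.1, y.2), Or.inl y.1.2⟩) (fun y => ⟨(y.1.1, y.2.1), Or.inr y.2.2⟩)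
  left_inv w := by
    by_cases h : IsUnit w.1.1 <;> simp [h]
  right_inv x := by
    rcases x with ⟨y, d⟩ | ⟨y, d⟩
    · simp [y.2]
    · simp [y.2]

lemma card_um_true (n : ℕ) [NeZero n] (P : ZMod n × ZMod n → Prop) (hP : ∀ w, P w) :
    Nat.card {w : Um n // P w.1} =
      Nat.card (ZMod n)ˣ * n + (n - Nat.card (ZMod n)ˣ) * Nat.card (ZMod n)ˣ := by
  have e0 : {w : Um n // P w.1} ≃ Um n := by
    refine Equiv.subtypeUnivEquiv fun w => hP _
  rw [Nat.card_congr (e0.trans (umEquiv n)), Nat.card_sum, Nat.card_prod, Nat.card_prod,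
    card_isUnit_subtype, card_not_isUnit_subtype, Nat.card_zmod]

/-- Decomposition for the `2 p^j` case. -/
lemma card_um_case2 (n : ℕ) [NeZero n] (z : ZMod n) (hz : z ≠ 0) :
    Nat.card {w : Um n // z * (w.1.1 * w.1.2) = 0} =
      Nat.card (ZMod n)ˣ * Nat.card {x : ZMod n // z * x = 0}
      + Nat.card {x : ZMod n // z * x = 0} * Nat.card (ZMod n)ˣ := by
  have hnu : ∀ x : ZMod n, z * x = 0 → ¬ IsUnit x := by
    intro x hx hu
    obtain ⟨u, hu'⟩ := hu
    apply hz
    apply mul_unit_eq_zero (u := u)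
    rw [hu']; exact hx
  have e : {w : Um n // z * (w.1.1 * w.1.2) = 0} ≃
      ({x : ZMod n // IsUnit x} × {x : ZMod n // z * x = 0})
      ⊕ ({x : ZMod n // z * x = 0} × {x : ZMod n // IsUnit x}) := by
    refine
      { toFun := fun w => if h : IsUnit w.1.1.1 then
          Sum.inl (⟨w.1.1.1, h⟩, ⟨w.1.1.2, ?_⟩)
          else Sum.inr (⟨w.1.1.1, ?_⟩, ⟨w.1.1.2, w.1.2.resolve_left h⟩)
        invFun := fun x => x.elim
          (fun y => ⟨⟨(y.1.1, y.2.1), Or.inl y.1.2⟩, by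
            have := y.2.2
            linear_combination y.1.1 * this⟩)
          (fun y => ⟨⟨(y.1.1, y.2.1), Or.inr y.2.2⟩, by
            have := y.1.2
            linear_combination y.2.1 * this⟩)
        left_inv := ?_
        right_inv := ?_ }
    · -- z * w.1.1.2 = 0 when w.1.1.1 is a unit
      obtain ⟨u, hu'⟩ := h
      apply mul_unit_eq_zero (u := u)
      have hw := w.2
      rw [hu']
      linear_combination hw
    · -- z * w.1.1.1 = 0 when w.1.1.2 is a unit
      have hd : IsUnit w.1.1.2 := w.1.2.resolve_left h
      obtain ⟨u, hu'⟩ := hd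
      apply mul_unit_eq_zero (u := u)
      have hw := w.2
      rw [hu']
      linear_combination hw
    · intro w
      by_cases h : IsUnit w.1.1.1 <;> simp [h]
    · intro x
      rcases x with ⟨y, d⟩ | ⟨y, d⟩
      · simp [y.2]
      · have : ¬ IsUnit y.1 := hnu _ y.2
        simp [this]
  rw [Nat.card_congr e, Nat.card_sum, Nat.card_prod, Nat.card_prod, card_isUnit_subtype]

/-- Decomposition for the `p^j` case. -/
lemma card_um_case1 (n : ℕ) [NeZero n] (z : ZMod n) (hz : z ≠ 0) :
    Nat.card {w : Um n // z * (w.1.1 * w.1.2) = 0 ∧ z * (w.1.1 * w.1.1) = 0} =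
      Nat.card {x : ZMod n // z * x = 0} * Nat.card (ZMod n)ˣ := by
  have e : {w : Um n // z * (w.1.1 * w.1.2) = 0 ∧ z * (w.1.1 * w.1.1) = 0} ≃
      ({x : ZMod n // z * x = 0} × {x : ZMod n // IsUnit x}) := by
    refine
      { toFun := fun w => (⟨w.1.1.1, ?_⟩, ⟨w.1.1.2, ?_⟩)
        invFun := fun y => ⟨⟨(y.1.1, y.2.1), Or.inr y.2.2⟩,
          ⟨by have := y.1.2; linear_combination y.2.1 * this,
           by have := y.1.2; linear_combination y.1.1 * this⟩⟩
        left_inv := fun w => Subtype.ext rfl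
        right_inv := fun y => rfl }
    case refine_2 =>
      -- w.1.1.2 is a unit
      by_contra hd
      have hc : ¬ IsUnit w.1.1.1 := by
        intro hcu
        obtain ⟨u, hu'⟩ := hcu
        have h2 := w.2.2
        apply hz
        have hzc : z * w.1.1.1 = 0 := by
          apply mul_unit_eq_zero (u := u)
          rw [hu']
          linear_combination h2
        apply mul_unit_eq_zero (u := u)
        rw [hu']; exact hzc
      exact hd (w.1.2.resolve_left hc)
    case refine_1 =>
      have hc : ¬ IsUnit w.1.1.1 := by
        intro hcu
        obtain ⟨u, hu'⟩ := hcu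
        have h2 := w.2.2
        apply hz
        have hzc : z * w.1.1.1 = 0 := by
          apply mul_unit_eq_zero (u := u)
          rw [hu']
          linear_combination h2
        apply mul_unit_eq_zero (u := u)
        rw [hu']; exact hzc
      have hd : IsUnit w.1.1.2 := w.1.2.resolve_left hc
      obtain ⟨u, hu'⟩ := hd
      apply mul_unit_eq_zero (u := u)
      have h1 := w.2.1
      rw [hu']
      linear_combination h1
  rw [Nat.card_congr e, Nat.card_prod, card_isUnit_subtype]

/-- The set for the Borel itself. -/
lemma card_um_B0 (n : ℕ) [NeZero n] (h0 : ¬ IsUnit (0 : ZMod n)) :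
    Nat.card {w : Um n // w.1.1 = 0} = Nat.card (ZMod n)ˣ := by
  have e : {w : Um n // w.1.1 = 0} ≃ {x : ZMod n // IsUnit x} := by
    refine
      { toFun := fun w => ⟨w.1.1.2, w.1.2.resolve_left (by rw [w.2]; exact h0)⟩
        invFun := fun x => ⟨⟨(0, x.1), Or.inr x.2⟩, rfl⟩
        left_inv := fun w => ?_
        right_inv := fun x => rfl }
    apply Subtype.ext
    apply Subtype.ext
    exact Prod.ext w.2.symm rfl
  rw [Nat.card_congr e, card_isUnit_subtype]

/-! ### Annihilator counting in `ZMod (p ^ k)` -/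

def dvdValEquiv (a b : ℕ) (ha : 0 < a) (hb : 0 < b) :
    haveI : NeZero (a * b) := ⟨by positivity⟩
    {x : ZMod (a * b) // a ∣ x.val} ≃ Fin b := by
  haveI : NeZero (a * b) := ⟨by positivity⟩
  refine
    { toFun := fun x => ⟨x.1.val / a, ?_⟩
      invFun := fun t => ⟨((a * (t : ℕ) : ℕ) : ZMod (a * b)), ?_⟩
      left_inv := fun x => ?_
      right_inv := fun t => ?_ }
  · obtain ⟨c, hc⟩ := x.2
    have hlt : x.1.val < a * b := ZMod.val_lt _
    rw [hc, Nat.mul_div_cancel_left _ ha]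
    rw [hc] at hlt
    exact lt_of_mul_lt_mul_left hlt (le_of_lt ha)
  · have hlt : a * (t : ℕ) < a * b := mul_lt_mul_of_pos_left t.2 ha
    rw [ZMod.val_natCast, Nat.mod_eq_of_lt hlt]
    exact Dvd.intro _ rfl
  · apply Subtype.ext
    show ((a * (x.1.val / a) : ℕ) : ZMod (a * b)) = x.1
    rw [Nat.mul_div_cancel' x.2]
    exact ZMod.natCast_rightInverse x.1
  · apply Fin.ext
    show (((a * (t : ℕ) : ℕ) : ZMod (a * b))).val / a = (t : ℕ)
    have hlt : a * (t : ℕ) < a * b := mul_lt_mul_of_pos_left t.2 ha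
    rw [ZMod.val_natCast, Nat.mod_eq_of_lt hlt, Nat.mul_div_cancel_left _ ha]

lemma ann_iff {p k j : ℕ} (hp : p.Prime) (hjk : j ≤ k) [NeZero (p ^ k)] (x : ZMod (p ^ k)) :
    (p : ZMod (p ^ k)) ^ j * x = 0 ↔ p ^ (k - j) ∣ x.val := by
  have hx : ((x.val : ℕ) : ZMod (p ^ k)) = x := ZMod.natCast_rightInverse x
  constructor
  · intro h
    rw [← hx, ← Nat.cast_pow, ← Nat.cast_mul, ZMod.natCast_eq_zero_iff] at h
    have hsplit : p ^ k = p ^ j * p ^ (k - j) := by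
      rw [← pow_add]
      congr 1
      omega
    have h' : p ^ j * p ^ (k - j) ∣ p ^ j * x.val := by rw [← hsplit]; exact h
    exact (Nat.mul_dvd_mul_iff_left (pow_pos hp.pos j)).mp h' 
  · intro h
    obtain ⟨c, hc⟩ := h
    have hxe : x = ((p ^ (k - j) * c : ℕ) : ZMod (p ^ k)) := by rw [← hc, hx]
    rw [hxe, ← Nat.cast_pow, ← Nat.cast_mul, ZMod.natCast_eq_zero_iff]
    have he2 : p ^ j * (p ^ (k - j) * c) = p ^ k * c := by
      rw [← mul_assoc, ← pow_add]
      congr 2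
      omega
    rw [he2]
    exact Dvd.intro c rfl

lemma card_ann {p k j : ℕ} (hp : p.Prime) (hjk : j ≤ k) [NeZero (p ^ k)] :
    Nat.card {x : ZMod (p ^ k) // (p : ZMod (p ^ k)) ^ j * x = 0} = p ^ j := by
  have e1 : {x : ZMod (p ^ k) // (p : ZMod (p ^ k)) ^ j * x = 0}
      ≃ {x : ZMod (p ^ k) // p ^ (k - j) ∣ x.val} :=
    Equiv.subtypeEquivRight fun x => ann_iff hp hjk x
  rw [Nat.card_congr e1]
  have hsplit : p ^ k = p ^ (k - j) * p ^ j := by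
    rw [← pow_add]
    congr 1
    omega
  rw [hsplit]
  rw [Nat.card_congr (dvdValEquiv (p ^ (k - j)) (p ^ j)
    (pow_pos hp.pos _) (pow_pos hp.pos _))]
  simp

/-! ### The structural facts about `ZMod (p ^ k)` -/

lemma p_dvd_of_not_isUnit {p k : ℕ} (hp : p.Prime) [NeZero (p ^ k)]
    {x : ZMod (p ^ k)} (hx : ¬ IsUnit x) : ∃ y, x = (p : ZMod (p ^ k)) * y := by
  have hxv : ((x.val : ℕ) : ZMod (p ^ k)) = x := ZMod.natCast_rightInverse x
  have hcop : ¬ x.val.Coprime (p ^ k) := by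
    intro hc
    exact hx (hxv ▸ (ZMod.isUnit_iff_coprime x.val (p ^ k)).mpr hc)
  have hpd : p ∣ x.val := by
    have hg : Nat.gcd x.val (p ^ k) ∣ p ^ k := Nat.gcd_dvd_right _ _
    obtain ⟨i, hik, hi⟩ := (Nat.dvd_prime_pow hp).mp hg
    have hi0 : i ≠ 0 := by
      intro h0
      apply hcop
      rw [Nat.Coprime]
      rw [h0, pow_zero] at hi
      exact hi
    calc p ∣ p ^ i := dvd_pow_self p hi0
    _ = Nat.gcd x.val (p ^ k) := hi.symm
    _ ∣ x.val := Nat.gcd_dvd_left _ _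
  obtain ⟨t, ht⟩ := hpd
  refine ⟨(t : ZMod (p ^ k)), ?_⟩
  rw [← hxv, ht]
  push_cast
  ring

lemma hl_pk {p k : ℕ} (hp : p.Prime) (hk : 0 < k) [NeZero (p ^ k)] :
    ∀ a b : ZMod (p ^ k), IsUnit (a + b) → IsUnit a ∨ IsUnit b := by
  intro a b hab
  by_contra hc
  push_neg at hc
  obtain ⟨y, hy⟩ := p_dvd_of_not_isUnit hp hc.1
  obtain ⟨z, hz⟩ := p_dvd_of_not_isUnit hp hc.2
  rw [hy, hz, ← mul_add] at hab
  have hpu : IsUnit (p : ZMod (p ^ k)) := isUnit_of_mul_isUnit_left hab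
  rw [ZMod.isUnit_prime_iff_not_dvd hp] at hpu
  exact hpu (dvd_pow_self p hk.ne')

lemma ppow_ne_zero {p k j : ℕ} (hp : p.Prime) (hjk : j < k) [NeZero (p ^ k)] :
    ((p : ZMod (p ^ k)) ^ j : ZMod (p ^ k)) ≠ 0 := by
  intro h
  rw [← Nat.cast_pow, ZMod.natCast_eq_zero_iff] at h
  have := Nat.le_of_dvd (pow_pos hp.pos _) h
  have := Nat.pow_lt_pow_right hp.one_lt hjk
  omega

lemma isUnit_one_add_ppow {p k j : ℕ} (hp : p.Prime) (hodd : Odd p) (hj : True)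
    [NeZero (p ^ k)] : IsUnit (1 + (p : ZMod (p ^ k)) ^ j) := by
  have hcast : (1 + (p : ZMod (p ^ k)) ^ j) = ((1 + p ^ j : ℕ) : ZMod (p ^ k)) := by
    push_cast
    ring
  rw [hcast, ZMod.isUnit_iff_coprime]
  apply Nat.Coprime.pow_right
  apply Nat.Coprime.symm
  rw [Nat.Prime.coprime_iff_not_dvd hp]
  intro hdvd
  rcases Nat.eq_zero_or_pos j with hj0 | hj0
  · rw [hj0, pow_zero] at hdvd
    have hdvd2 : p ∣ 2 := by exact hdvd
    have hp2 : p = 2 := (Nat.prime_dvd_prime_iff_eq hp Nat.prime_two).mp hdvd2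
    rw [hp2] at hodd
    simp [Nat.odd_iff] at hodd
  · have h1 : p ∣ p ^ j := dvd_pow_self p hj0.ne'
    have h2 : p ∣ 1 := by
      have h3 := Nat.dvd_sub hdvd h1
      simpa using h3
    have := Nat.le_of_dvd one_pos h2
    have := hp.one_lt
    omega


/-! ### Conjugation conditions -/

lemma forall_mem_closure_iff [NeZero n] (g : GL2 n) (s : Set (GL2 n)) :
    (∀ r ∈ Subgroup.closure s, g * r * g⁻¹ ∈ B0 n) ↔ ∀ x ∈ s, g * x * g⁻¹ ∈ B0 n := by
  constructor
  · exact fun h x hx => h x (Subgroup.subset_closure hx)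
  · intro h r hr
    have hsub : s ⊆ ↑((B0sub n).comap (MulAut.conj g).toMonoidHom) := by
      intro x hx
      rw [SetLike.mem_coe, Subgroup.mem_comap]
      show MulAut.conj g x ∈ B0sub n
      rw [MulAut.conj_apply]
      exact h x hx
    have hmem := (Subgroup.closure_le _).mpr hsub hr
    rw [Subgroup.mem_comap] at hmem
    have h2 : MulAut.conj g r ∈ B0sub n := hmem
    rwa [MulAut.conj_apply] at h2

lemma conj_mem_iff [NeZero n] (g M : GL2 n) :
    g * M * g⁻¹ ∈ B0 n ↔
      ((g : Matrix (Fin 2) (Fin 2) (ZMod n)) * (M : Matrix (Fin 2) (Fin 2) (ZMod n))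
        * ((g : Matrix (Fin 2) (Fin 2) (ZMod n)).adjugate)) 1 0 = 0 := by
  have hdet : IsUnit ((g : Matrix (Fin 2) (Fin 2) (ZMod n)).det) :=
    (Matrix.isUnit_iff_isUnit_det _).mp g.isUnit
  show ((g * M * g⁻¹ : GL2 n) : Matrix (Fin 2) (Fin 2) (ZMod n)) 1 0 = 0 ↔ _
  rw [Units.val_mul, Units.val_mul, Matrix.coe_units_inv, Matrix.inv_def, Matrix.mul_smul,
    Matrix.smul_apply, smul_eq_mul]
  exact (isUnit_ringInverse.mpr hdet).mul_right_eq_zero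

lemma conj_entry_eq [NeZero n] (g : GL2 n) (Mm : Matrix (Fin 2) (Fin 2) (ZMod n)) :
    ((g : Matrix (Fin 2) (Fin 2) (ZMod n)) * Mm
        * ((g : Matrix (Fin 2) (Fin 2) (ZMod n)).adjugate)) 1 0
      = ((g : Matrix (Fin 2) (Fin 2) (ZMod n)) 1 0 * (g : Matrix (Fin 2) (Fin 2) (ZMod n)) 1 1)
          * (Mm 0 0 - Mm 1 1)
        + ((g : Matrix (Fin 2) (Fin 2) (ZMod n)) 1 1) ^ 2 * Mm 1 0
        - ((g : Matrix (Fin 2) (Fin 2) (ZMod n)) 1 0) ^ 2 * Mm 0 1 := by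
  rw [Matrix.adjugate_fin_two]
  simp only [Matrix.mul_apply, Fin.sum_univ_two, Matrix.of_apply, Matrix.cons_val',
    Matrix.cons_val_zero, Matrix.cons_val_one, Matrix.head_cons, Matrix.empty_val',
    Matrix.cons_val_fin_one, Matrix.head_fin_const]
  ring

/-- Diagonal element `diag (1, 1 + z)`. -/
def diagGL [NeZero n] (z : ZMod n) (hu : IsUnit (1 + z)) : GL2 n :=
  mkGL !![1, 0; 0, 1 + z] (by
    rw [Matrix.det_fin_two_of]
    have he : (1 : ZMod n) * (1 + z) - 0 * 0 = 1 + z := by ring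
    rw [he]; exact hu)

/-- Shear element `!![1, z; 0, 1]`. -/
def shearGL [NeZero n] (z : ZMod n) : GL2 n :=
  mkGL !![1, z; 0, 1] (by
    rw [Matrix.det_fin_two_of]
    have he : (1 : ZMod n) * 1 - z * 0 = 1 := by ring
    rw [he]; exact isUnit_one)

/-- The swap element. -/
def swapGL (n : ℕ) [NeZero n] : GL2 n :=
  mkGL !![0, 1; 1, 0] (by
    rw [Matrix.det_fin_two_of]
    have he : (0 : ZMod n) * 0 - 1 * 1 = -1 := by ring
    rw [he]; exact isUnit_one.neg)

lemma conj_diag_mem_iff [NeZero n] (g : GL2 n) (z : ZMod n) (hu : IsUnit (1 + z)) :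
    g * diagGL z hu * g⁻¹ ∈ B0 n ↔
      z * ((g : Matrix (Fin 2) (Fin 2) (ZMod n)) 1 0
        * (g : Matrix (Fin 2) (Fin 2) (ZMod n)) 1 1) = 0 := by
  rw [conj_mem_iff, conj_entry_eq]
  have h00 : ((diagGL z hu : GL2 n) : Matrix (Fin 2) (Fin 2) (ZMod n)) 0 0 = 1 := rfl
  have h01 : ((diagGL z hu : GL2 n) : Matrix (Fin 2) (Fin 2) (ZMod n)) 0 1 = 0 := rfl
  have h10 : ((diagGL z hu : GL2 n) : Matrix (Fin 2) (Fin 2) (ZMod n)) 1 0 = 0 := rfl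
  have h11 : ((diagGL z hu : GL2 n) : Matrix (Fin 2) (Fin 2) (ZMod n)) 1 1 = 1 + z := rfl
  rw [h00, h01, h10, h11]
  constructor <;> intro h <;> linear_combination -h

lemma conj_shear_mem_iff [NeZero n] (g : GL2 n) (z : ZMod n) :
    g * shearGL z * g⁻¹ ∈ B0 n ↔
      z * ((g : Matrix (Fin 2) (Fin 2) (ZMod n)) 1 0
        * (g : Matrix (Fin 2) (Fin 2) (ZMod n)) 1 0) = 0 := by
  rw [conj_mem_iff, conj_entry_eq]
  have h00 : ((shearGL z : GL2 n) : Matrix (Fin 2) (Fin 2) (ZMod n)) 0 0 = 1 := rfl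
  have h01 : ((shearGL z : GL2 n) : Matrix (Fin 2) (Fin 2) (ZMod n)) 0 1 = z := rfl
  have h10 : ((shearGL z : GL2 n) : Matrix (Fin 2) (Fin 2) (ZMod n)) 1 0 = 0 := rfl
  have h11 : ((shearGL z : GL2 n) : Matrix (Fin 2) (Fin 2) (ZMod n)) 1 1 = 1 := rfl
  rw [h00, h01, h10, h11]
  constructor <;> intro h <;> linear_combination -h

lemma card_B0 {p k : ℕ} (hp : p.Prime) (hk : 0 < k) [NeZero (p ^ k)]
    (h0 : ¬ IsUnit (0 : ZMod (p ^ k))) :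
    Nat.card (B0 (p ^ k)) =
      Nat.card (ZMod (p ^ k))ˣ * (Nat.card (ZMod (p ^ k))ˣ * p ^ k) := by
  have hseteq : B0 (p ^ k) = {g : GL2 (p ^ k) |
      (fun w : ZMod (p ^ k) × ZMod (p ^ k) => w.1 = 0)
        ((g : Matrix (Fin 2) (Fin 2) (ZMod (p ^ k))) 1 0,
         (g : Matrix (Fin 2) (Fin 2) (ZMod (p ^ k))) 1 1)} := rfl
  rw [hseteq, master (hl_pk hp hk) (fun w => w.1 = 0), card_um_B0 _ h0]

end

end NOIAux

theorem number_of_isogenies_all_values_achieved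
    (p k : ℕ) (hp : p.Prime) (hodd : Odd p) (hk : 0 < k) :
    {0} ∪ {m | ∃ j < k, m = p ^ j} ∪ {m | ∃ j < k, m = 2 * p ^ j}
        ∪ {p ^ k + p ^ (k - 1)} ⊆ Sset (B0 (p ^ k)) := by
  classical
  haveI : NeZero (p ^ k) := ⟨pow_ne_zero _ hp.pos.ne'⟩
  have h1lt : 1 < p ^ k := by
    calc 1 < p := hp.one_lt
    _ ≤ p ^ k := Nat.le_self_pow hk.ne' p
  haveI : Fact (1 < p ^ k) := ⟨h1lt⟩
  have h0 : ¬ IsUnit (0 : ZMod (p ^ k)) := by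
    intro h
    exact zero_ne_one (isUnit_zero_iff.mp h)
  have hl := NOIAux.hl_pk (k := k) hp hk
  have hB0 := NOIAux.card_B0 hp hk h0
  intro m hm
  rcases hm with ((hm | hm) | hm) | hm
  · -- m = 0
    rw [Set.mem_singleton_iff] at hm
    subst hm
    refine ⟨⊤, ?_⟩
    have hset : {g : GL2 (p ^ k) | ∀ r ∈ (⊤ : Subgroup (GL2 (p ^ k))), g * r * g⁻¹ ∈ B0 (p ^ k)}
        = ∅ := by
      ext g
      constructor
      · intro hg
        have hmem := hg (g⁻¹ * NOIAux.swapGL (p ^ k) * g) (Subgroup.mem_top _)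
        have heq : g * (g⁻¹ * NOIAux.swapGL (p ^ k) * g) * g⁻¹ = NOIAux.swapGL (p ^ k) := by
          group
        rw [heq] at hmem
        have h2 : ((NOIAux.swapGL (p ^ k) : GL2 (p ^ k)) :
            Matrix (Fin 2) (Fin 2) (ZMod (p ^ k))) 1 0 = 0 := hmem
        have h3 : ((NOIAux.swapGL (p ^ k) : GL2 (p ^ k)) :
            Matrix (Fin 2) (Fin 2) (ZMod (p ^ k))) 1 0 = 1 := rfl
        rw [h3] at h2
        exact one_ne_zero h2
      · intro h
        exact absurd h (Set.notMem_empty g)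
    show Nat.card {g : GL2 (p ^ k) | ∀ r ∈ (⊤ : Subgroup (GL2 (p ^ k))), g * r * g⁻¹ ∈ B0 (p ^ k)}
        = 0 * Nat.card (B0 (p ^ k))
    rw [hset]
    simp
  · -- m = p ^ j
    obtain ⟨j, hjk, rfl⟩ := hm
    set z : ZMod (p ^ k) := (p : ZMod (p ^ k)) ^ j with hzdef
    have hz : z ≠ 0 := NOIAux.ppow_ne_zero hp hjk
    have hu : IsUnit (1 + z) := NOIAux.isUnit_one_add_ppow hp hodd trivial
    refine ⟨Subgroup.closure {NOIAux.diagGL z hu, NOIAux.shearGL z}, ?_⟩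
    have hset : {g : GL2 (p ^ k) |
        ∀ r ∈ Subgroup.closure {NOIAux.diagGL z hu, NOIAux.shearGL z}, g * r * g⁻¹ ∈ B0 (p ^ k)}
        = {g : GL2 (p ^ k) | (fun w : ZMod (p ^ k) × ZMod (p ^ k) =>
            z * (w.1 * w.2) = 0 ∧ z * (w.1 * w.1) = 0)
          ((g : Matrix (Fin 2) (Fin 2) (ZMod (p ^ k))) 1 0,
           (g : Matrix (Fin 2) (Fin 2) (ZMod (p ^ k))) 1 1)} := by
      ext g
      simp only [Set.mem_setOf_eq]
      rw [NOIAux.forall_mem_closure_iff]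
      constructor
      · intro h
        refine ⟨(NOIAux.conj_diag_mem_iff g z hu).mp (h _ ?_),
          (NOIAux.conj_shear_mem_iff g z).mp (h _ ?_)⟩
        · exact Set.mem_insert _ _
        · exact Set.mem_insert_of_mem _ rfl
      · rintro ⟨h1, h2⟩ x hx
        rcases hx with rfl | hx
        · exact (NOIAux.conj_diag_mem_iff g z hu).mpr h1
        · rw [Set.mem_singleton_iff] at hx
          subst hx
          exact (NOIAux.conj_shear_mem_iff g z).mpr h2
    show Nat.card {g : GL2 (p ^ k) |
        ∀ r ∈ Subgroup.closure {NOIAux.diagGL z hu, NOIAux.shearGL z}, g * r * g⁻¹ ∈ B0 (p ^ k)}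
        = p ^ j * Nat.card (B0 (p ^ k))
    rw [hset, NOIAux.master hl (fun w : ZMod (p ^ k) × ZMod (p ^ k) =>
        z * (w.1 * w.2) = 0 ∧ z * (w.1 * w.1) = 0),
      NOIAux.card_um_case1 _ z hz, hzdef, NOIAux.card_ann hp hjk.le, hB0]
    ring
  · -- m = 2 * p ^ j
    obtain ⟨j, hjk, rfl⟩ := hm
    set z : ZMod (p ^ k) := (p : ZMod (p ^ k)) ^ j with hzdef
    have hz : z ≠ 0 := NOIAux.ppow_ne_zero hp hjk
    have hu : IsUnit (1 + z) := NOIAux.isUnit_one_add_ppow hp hodd trivial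
    refine ⟨Subgroup.closure {NOIAux.diagGL z hu}, ?_⟩
    have hset : {g : GL2 (p ^ k) |
        ∀ r ∈ Subgroup.closure {NOIAux.diagGL z hu}, g * r * g⁻¹ ∈ B0 (p ^ k)}
        = {g : GL2 (p ^ k) | (fun w : ZMod (p ^ k) × ZMod (p ^ k) => z * (w.1 * w.2) = 0)
          ((g : Matrix (Fin 2) (Fin 2) (ZMod (p ^ k))) 1 0,
           (g : Matrix (Fin 2) (Fin 2) (ZMod (p ^ k))) 1 1)} := by
      ext g
      simp only [Set.mem_setOf_eq]
      rw [NOIAux.forall_mem_closure_iff]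
      constructor
      · intro h
        exact (NOIAux.conj_diag_mem_iff g z hu).mp (h _ rfl)
      · intro h x hx
        rw [Set.mem_singleton_iff] at hx
        subst hx
        exact (NOIAux.conj_diag_mem_iff g z hu).mpr h
    show Nat.card {g : GL2 (p ^ k) |
        ∀ r ∈ Subgroup.closure {NOIAux.diagGL z hu}, g * r * g⁻¹ ∈ B0 (p ^ k)}
        = 2 * p ^ j * Nat.card (B0 (p ^ k))
    rw [hset, NOIAux.master hl (fun w : ZMod (p ^ k) × ZMod (p ^ k) => z * (w.1 * w.2) = 0),
      NOIAux.card_um_case2 _ z hz, hzdef, NOIAux.card_ann hp hjk.le, hB0]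
    ring
  · -- m = p ^ k + p ^ (k - 1)
    rw [Set.mem_singleton_iff] at hm
    subst hm
    refine ⟨⊥, ?_⟩
    have hset : {g : GL2 (p ^ k) | ∀ r ∈ (⊥ : Subgroup (GL2 (p ^ k))), g * r * g⁻¹ ∈ B0 (p ^ k)}
        = {g : GL2 (p ^ k) | (fun _ : ZMod (p ^ k) × ZMod (p ^ k) => True)
          ((g : Matrix (Fin 2) (Fin 2) (ZMod (p ^ k))) 1 0,
           (g : Matrix (Fin 2) (Fin 2) (ZMod (p ^ k))) 1 1)} := by
      ext g
      simp only [Set.mem_setOf_eq, iff_true]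
      intro r hr
      rw [Subgroup.mem_bot] at hr
      subst hr
      have heq : g * 1 * g⁻¹ = (1 : GL2 (p ^ k)) := by group
      rw [heq]
      exact (NOIAux.B0sub (p ^ k)).one_mem
    show Nat.card {g : GL2 (p ^ k) | ∀ r ∈ (⊥ : Subgroup (GL2 (p ^ k))), g * r * g⁻¹ ∈ B0 (p ^ k)}
        = (p ^ k + p ^ (k - 1)) * Nat.card (B0 (p ^ k))
    rw [hset, NOIAux.master hl (fun _ : ZMod (p ^ k) × ZMod (p ^ k) => True),
      NOIAux.card_um_true _ _ (fun _ => trivial), hB0]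
    have hφ : Nat.card (ZMod (p ^ k))ˣ = p ^ (k - 1) * (p - 1) := by
      rw [Nat.card_eq_fintype_card, ZMod.card_units_eq_totient, Nat.totient_prime_pow hp hk]
    obtain ⟨q, hq⟩ : ∃ q, p = q + 1 := ⟨p - 1, by have := hp.pos; omega⟩
    have hn : p ^ k = p ^ (k - 1) * p := by
      conv_lhs => rw [show k = (k - 1) + 1 by omega]
      rw [pow_succ]
    set a : ℕ := p ^ (k - 1) with ha
    set Φ : ℕ := Nat.card (ZMod (p ^ k))ˣ with hΦ
    have hΦval : Φ = a * q := by
      rw [hφ]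
      congr 1
      omega
    rw [hn, hΦval, hq]
    have hsub : a * (q + 1) - a * q = a := by
      rw [Nat.mul_succ, Nat.add_sub_cancel_left]
    rw [hsub]
    ring
end

section
/- Let n > 1 be a positive integer with prime factorization n = ∏_{i=1}^r p_i^{e_i} (with p_1, …, p_r distinct primes and e_i ≥ 1). Then a natural number m belongs to S(B₀(n)) if and only if m can be written as a product m = x_1 x_2 ⋯ x_r where x_i ∈ S(B₀(p_i^{e_i})) for each i = 1, …, r. -/
open Matrix

/-! ### Auxiliary lemmas -/

section Aux

/-- If a set `T` is invariant under left multiplication by a subgroup `K`, then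
`Nat.card K` divides `Nat.card T`. -/
lemma card_dvd_card_of_invariant {G : Type*} [Group G] (K : Subgroup G) (T : Set G)
    (hT : ∀ k ∈ K, ∀ t ∈ T, k * t ∈ T) : Nat.card K ∣ Nat.card T := by
  classical
  letI S : Setoid T := ⟨fun a b => (a : G) * (b : G)⁻¹ ∈ K,
    ⟨fun a => by simpa using one_mem K,
     fun {a b} h => by simpa using inv_mem h,
     fun {a b c} hab hbc => by simpa [mul_assoc] using mul_mem hab hbc⟩⟩
  have hmem : ∀ (q : Quotient S) (k : K), ((k : G) * ((q.out : T) : G)) ∈ T :=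
    fun q k => hT _ k.2 _ (q.out).2
  let f : T → Quotient S × K := fun t =>
    (Quotient.mk S t, ⟨(t : G) * (((Quotient.mk S t).out : T) : G)⁻¹,
      Setoid.symm (Quotient.mk_out t)⟩)
  let g : Quotient S × K → T := fun qk => ⟨(qk.2 : G) * ((qk.1.out : T) : G), hmem qk.1 qk.2⟩
  have hgf : ∀ t, g (f t) = t := by
    intro t
    apply Subtype.ext
    show ((t : G) * (((Quotient.mk S t).out : T) : G)⁻¹) * (((Quotient.mk S t).out : T) : G)
        = (t : G)
    exact inv_mul_cancel_right _ _
  have hfg : ∀ qk, f (g qk) = qk := by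
    rintro ⟨q, k⟩
    have h1 : Quotient.mk S (g (q, k)) = q := by
      refine (Quotient.sound ?_).trans (Quotient.out_eq q)
      show ((k : G) * ((q.out : T) : G)) * ((q.out : T) : G)⁻¹ ∈ K
      simpa using k.2
    refine Prod.ext h1 (Subtype.ext ?_)
    show ((k : G) * ((q.out : T) : G)) * (((Quotient.mk S (g (q, k))).out : T) : G)⁻¹ = (k : G)
    rw [h1]
    exact mul_inv_cancel_right _ _
  have hcard : Nat.card T = Nat.card (Quotient S) * Nat.card K := by
    rw [← Nat.card_prod]
    exact Nat.card_congr ⟨f, g, hgf, hfg⟩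
  rw [hcard]
  exact dvd_mul_left _ _

/-- `(∀ i, M i)ˣ ≃* ∀ i, (M i)ˣ`. -/
def unitsPi {ι : Type*} (M : ι → Type*) [∀ i, Monoid (M i)] : (∀ i, M i)ˣ ≃* ∀ i, (M i)ˣ where
  toFun u i := ⟨u.val i, u.inv i, congrFun u.val_inv i, congrFun u.inv_val i⟩
  invFun f := ⟨fun i => (f i : M i), fun i => ((f i)⁻¹ : (M i)ˣ),
    funext fun i => (f i).val_inv, funext fun i => (f i).inv_val⟩
  left_inv u := by ext; rfl
  right_inv f := by ext; rfl
  map_mul' u v := by ext; rfl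

/-- Matrices over a product ring are a product of matrix rings. -/
def matrixPi {ι : Type*} {n : Type*} [Fintype n] [DecidableEq n] (R : ι → Type*)
    [∀ i, CommRing (R i)] :
    Matrix n n (∀ i, R i) ≃+* ∀ i, Matrix n n (R i) where
  toFun M i := (Pi.evalRingHom R i).mapMatrix M
  invFun N := fun j k i => N i j k
  left_inv _ := rfl
  right_inv _ := rfl
  map_add' M N := by funext i; exact _root_.map_add ((Pi.evalRingHom R i).mapMatrix) M N
  map_mul' M N := by funext i; exact _root_.map_mul ((Pi.evalRingHom R i).mapMatrix) M N

/-- The conjugation set transfers along a group isomorphism. -/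
lemma conjSet_image {G G' : Type*} [Group G] [Group G'] (e : G ≃* G') (H : Set G)
    (R : Subgroup G) :
    {g' : G' | ∀ r ∈ R.map e.toMonoidHom, g' * r * g'⁻¹ ∈ e '' H} =
      e '' {g : G | ∀ r ∈ R, g * r * g⁻¹ ∈ H} := by
  ext g'
  constructor
  · intro hg'
    refine ⟨e.symm g', fun r hr => ?_, e.apply_symm_apply g'⟩
    obtain ⟨h, hH, hh⟩ := hg' (e r) ⟨r, hr, rfl⟩
    have : e.symm g' * r * (e.symm g')⁻¹ = e.symm (g' * e r * g'⁻¹) := by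
      simp [_root_.map_mul, _root_.map_inv]
    rw [this, ← hh, e.symm_apply_apply]
    exact hH
  · rintro ⟨g, hg, rfl⟩ r' hr'
    obtain ⟨r, hr, rfl⟩ := hr'
    refine ⟨g * r * g⁻¹, hg r hr, by simp [_root_.map_mul, _root_.map_inv]⟩

lemma map_pi_eval {ι : Type*} [DecidableEq ι] {G : ι → Type*} [∀ i, Group (G i)]
    (R : ∀ i, Subgroup (G i)) (i : ι) :
    (Subgroup.pi Set.univ R).map (Pi.evalMonoidHom G i) = R i := by
  ext x
  constructor
  · rintro ⟨g, hg, rfl⟩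
    exact ((Subgroup.mem_pi Set.univ).mp hg) i (Set.mem_univ i)
  · intro hx
    refine Subgroup.mem_map.mpr ⟨Pi.mulSingle i x, (Subgroup.mem_pi Set.univ).mpr fun j _ => ?_, by simp⟩
    rcases eq_or_ne j i with h | hji
    · subst h; simpa using hx
    · rw [Pi.mulSingle_eq_of_ne hji]; exact one_mem _

lemma conjSet_pi {ι : Type*} {G : ι → Type*} [∀ i, Group (G i)] (H : ∀ i, Set (G i))
    (R : Subgroup (∀ i, G i)) :
    {g : ∀ i, G i | ∀ r ∈ R, g * r * g⁻¹ ∈ Set.pi Set.univ H} =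
      Set.pi Set.univ (fun i =>
        {g : G i | ∀ r ∈ R.map (Pi.evalMonoidHom G i), g * r * g⁻¹ ∈ H i}) := by
  ext g
  simp only [Set.mem_setOf_eq, Set.mem_pi, Set.mem_univ, forall_true_left,
    Pi.mul_apply, Pi.inv_apply]
  constructor
  · intro hg i r hr
    obtain ⟨ρ, hρ, rfl⟩ := Subgroup.mem_map.mp hr
    exact hg ρ hρ i
  · intro hg ρ hρ i
    exact hg i (ρ i) (Subgroup.mem_map.mpr ⟨ρ, hρ, rfl⟩)

end Aux

section B0sub

/-- `B₀(N)` as a subgroup. -/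
def B0sub (N : ℕ) : Subgroup (GL2 N) where
  carrier := B0 N
  one_mem' := by
    show ((1 : GL2 N) : Matrix (Fin 2) (Fin 2) (ZMod N)) 1 0 = 0
    rw [Units.val_one]
    exact Matrix.one_apply_ne (by decide)
  mul_mem' := by
    intro a b ha hb
    show ((a * b : GL2 N) : Matrix (Fin 2) (Fin 2) (ZMod N)) 1 0 = 0
    rw [Units.val_mul, Matrix.mul_apply, Fin.sum_univ_two]
    have ha' : (a : Matrix (Fin 2) (Fin 2) (ZMod N)) 1 0 = 0 := ha
    have hb' : (b : Matrix (Fin 2) (Fin 2) (ZMod N)) 1 0 = 0 := hb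
    rw [ha', hb']
    ring
  inv_mem' := by
    intro x hx
    have hx' : (x : Matrix (Fin 2) (Fin 2) (ZMod N)) 1 0 = 0 := hx
    -- x⁻¹ * x = 1, so its (1,0) entry is 0
    have h1 : ((x⁻¹ : GL2 N) : Matrix (Fin 2) (Fin 2) (ZMod N)) 1 0 *
        (x : Matrix (Fin 2) (Fin 2) (ZMod N)) 0 0 = 0 := by
      have := congrArg (fun M : Matrix (Fin 2) (Fin 2) (ZMod N) => M 1 0)
        (congrArg Units.val (inv_mul_cancel x))
      simp only [Units.val_mul, Units.val_one] at this
      rw [Matrix.mul_apply, Fin.sum_univ_two, hx', Matrix.one_apply_ne (by decide)] at this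
      simpa using this
    -- the (0,0) entry of an upper-triangular invertible matrix is a unit
    have hdet : IsUnit ((x : Matrix (Fin 2) (Fin 2) (ZMod N)).det) :=
      ⟨Matrix.GeneralLinearGroup.det x, rfl⟩
    rw [Matrix.det_fin_two, hx', mul_zero, sub_zero] at hdet
    have h00 : IsUnit ((x : Matrix (Fin 2) (Fin 2) (ZMod N)) 0 0) :=
      isUnit_of_mul_isUnit_left hdet
    obtain ⟨u, hu⟩ := h00
    show ((x⁻¹ : GL2 N) : Matrix (Fin 2) (Fin 2) (ZMod N)) 1 0 = 0
    calc ((x⁻¹ : GL2 N) : Matrix (Fin 2) (Fin 2) (ZMod N)) 1 0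
        = ((x⁻¹ : GL2 N) : Matrix (Fin 2) (Fin 2) (ZMod N)) 1 0 * u * ↑u⁻¹ := by
          rw [Units.mul_inv_cancel_right]
      _ = 0 := by rw [hu, h1, zero_mul]

lemma B0_one_mem (N : ℕ) : (1 : GL2 N) ∈ B0 N := (B0sub N).one_mem

end B0sub

theorem S_B0_multiplicative
    (n : ℕ) (hn : 1 < n) (r : ℕ) (p e : Fin r → ℕ)
    (hp : ∀ i, (p i).Prime)
    (hdist : ∀ i j, i ≠ j → p i ≠ p j)
    (he : ∀ i, 1 ≤ e i)
    (hfact : n = ∏ i, p i ^ e i) (m : ℕ) :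
    m ∈ Sset (B0 n) ↔
      ∃ x : Fin r → ℕ, (∀ i, x i ∈ Sset (B0 (p i ^ e i))) ∧ m = ∏ i, x i := by
  subst hfact
  classical
  have hNpos : ∀ i, 0 < p i ^ e i := fun i => pow_pos (hp i).pos _
  haveI : ∀ i, NeZero (p i ^ e i) := fun i => ⟨(hNpos i).ne'⟩
  haveI : NeZero (∏ i, p i ^ e i) := ⟨(Finset.prod_pos (fun i _ => hNpos i)).ne'⟩
  set N : ℕ := ∏ i, p i ^ e i with hN
  -- the CRT isomorphism on GL₂
  have cop : Pairwise (Function.onFun Nat.Coprime fun i => p i ^ e i) := fun i j hij =>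
    Nat.Coprime.pow _ _ ((Nat.coprime_primes (hp i) (hp j)).mpr (hdist i j hij))
  let crt : ZMod N ≃+* ∀ i, ZMod (p i ^ e i) := ZMod.prodEquivPi _ cop
  let ψ : Matrix (Fin 2) (Fin 2) (ZMod N) ≃+* ∀ i, Matrix (Fin 2) (Fin 2) (ZMod (p i ^ e i)) :=
    crt.mapMatrix.trans (matrixPi _)
  let φ : GL2 N ≃* ∀ i, GL2 (p i ^ e i) :=
    (Units.mapEquiv ψ.toMulEquiv).trans (unitsPi _)
  have hentry : ∀ (g : GL2 N) (i : Fin r) (j k : Fin 2),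
      ((φ g i : GL2 (p i ^ e i)) : Matrix (Fin 2) (Fin 2) (ZMod (p i ^ e i))) j k
        = crt ((g : Matrix (Fin 2) (Fin 2) (ZMod N)) j k) i := fun g i j k => rfl
  -- the image of B₀ under φ
  have hmem : ∀ g : GL2 N, (∀ i, φ g i ∈ B0 (p i ^ e i)) ↔ g ∈ B0 N := by
    intro g
    constructor
    · intro h
      have : crt ((g : Matrix (Fin 2) (Fin 2) (ZMod N)) 1 0) = 0 := by
        funext i
        exact (hentry g i 1 0) ▸ h i
      exact (EmbeddingLike.map_eq_zero_iff (f := crt)).mp this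
    · intro h i
      show ((φ g i : GL2 (p i ^ e i)) : Matrix (Fin 2) (Fin 2) (ZMod (p i ^ e i))) 1 0 = 0
      rw [hentry g i 1 0, show (g : Matrix (Fin 2) (Fin 2) (ZMod N)) 1 0 = 0 from h]
      simp
  have himg : φ '' B0 N = Set.pi Set.univ (fun i => B0 (p i ^ e i)) := by
    ext g'
    constructor
    · rintro ⟨g, hg, rfl⟩ i _
      exact (hmem g).mpr hg i
    · intro hg'
      refine ⟨φ.symm g', ?_, φ.apply_symm_apply g'⟩
      apply (hmem (φ.symm g')).mp
      intro i
      rw [φ.apply_symm_apply g']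
      exact hg' i (Set.mem_univ i)
  -- cardinality of pi sets
  have cardpi : ∀ (Sets : ∀ i, Set (GL2 (p i ^ e i))),
      Nat.card (Set.pi Set.univ Sets) = ∏ i, Nat.card (Sets i) := by
    intro Sets
    rw [Nat.card_congr (Equiv.Set.univPi Sets), Nat.card_pi]
  -- decomposition of the conjugation count
  have key : ∀ R : Subgroup (GL2 N),
      conjCount (B0 N) R = ∏ i, conjCount (B0 (p i ^ e i))
        ((R.map φ.toMonoidHom).map (Pi.evalMonoidHom (fun i => GL2 (p i ^ e i)) i)) := by
    intro R
    have h1 : conjCount (B0 N) R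
        = Nat.card {g' | ∀ r ∈ R.map φ.toMonoidHom, g' * r * g'⁻¹ ∈ φ '' B0 N} := by
      rw [conjSet_image φ (B0 N) R, conjCount,
        Nat.card_image_of_injective φ.injective]
    rw [h1, himg, conjSet_pi (fun i => B0 (p i ^ e i)) (R.map φ.toMonoidHom), cardpi]
    rfl
  -- cardinality of B₀ decomposes
  have cardB0 : Nat.card (B0 N) = ∏ i, Nat.card (B0 (p i ^ e i)) := by
    rw [← Nat.card_image_of_injective φ.injective (B0 N), himg, cardpi]
  -- positivity of the factors
  haveI : ∀ i, Nonempty (B0 (p i ^ e i)) := fun i => ⟨⟨1, B0_one_mem _⟩⟩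
  have cpos : ∀ i, 0 < Nat.card (B0 (p i ^ e i)) := fun i => Nat.card_pos
  -- divisibility of each factor
  have hdvd : ∀ (i : Fin r) (Ri : Subgroup (GL2 (p i ^ e i))),
      Nat.card (B0 (p i ^ e i)) ∣ conjCount (B0 (p i ^ e i)) Ri := by
    intro i Ri
    refine card_dvd_card_of_invariant (B0sub (p i ^ e i)) _ ?_
    intro k hk t ht
    intro ρ hρ
    have heq : (k * t) * ρ * (k * t)⁻¹ = k * (t * ρ * t⁻¹) * k⁻¹ := by group
    rw [heq]
    exact (B0sub (p i ^ e i)).mul_mem ((B0sub (p i ^ e i)).mul_mem hk (ht ρ hρ))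
      ((B0sub (p i ^ e i)).inv_mem hk)
  constructor
  · rintro ⟨R, hR⟩
    set Ri := fun i => (R.map φ.toMonoidHom).map
      (Pi.evalMonoidHom (fun i => GL2 (p i ^ e i)) i) with hRi
    have hx : ∀ i, ∃ c, conjCount (B0 (p i ^ e i)) (Ri i) = Nat.card (B0 (p i ^ e i)) * c :=
      fun i => (hdvd i (Ri i)).elim fun c hc => ⟨c, hc⟩
    choose x hxe using hx
    refine ⟨x, fun i => ⟨Ri i, by rw [hxe i, mul_comm]⟩, ?_⟩
    have h1 : m * ∏ i, Nat.card (B0 (p i ^ e i))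
        = (∏ i, x i) * ∏ i, Nat.card (B0 (p i ^ e i)) := by
      calc m * ∏ i, Nat.card (B0 (p i ^ e i)) = conjCount (B0 N) R := by rw [hR, cardB0]
        _ = ∏ i, conjCount (B0 (p i ^ e i)) (Ri i) := key R
        _ = ∏ i, (x i * Nat.card (B0 (p i ^ e i))) := by
            refine Finset.prod_congr rfl fun i _ => ?_
            rw [hxe i, mul_comm]
        _ = (∏ i, x i) * ∏ i, Nat.card (B0 (p i ^ e i)) := Finset.prod_mul_distrib
    exact Nat.eq_of_mul_eq_mul_right (Finset.prod_pos fun i _ => cpos i) h1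
  · rintro ⟨x, hx, rfl⟩
    choose Ri hRie using hx
    set R' : Subgroup (∀ i, GL2 (p i ^ e i)) := Subgroup.pi Set.univ Ri with hR'
    refine ⟨R'.map φ.symm.toMonoidHom, ?_⟩
    have hmap : (R'.map φ.symm.toMonoidHom).map φ.toMonoidHom = R' := by
      rw [Subgroup.map_map]
      have hcomp : φ.toMonoidHom.comp φ.symm.toMonoidHom = MonoidHom.id _ := by
        ext y
        simp
      rw [hcomp, Subgroup.map_id]
    rw [key (R'.map φ.symm.toMonoidHom), cardB0]
    calc ∏ i, conjCount (B0 (p i ^ e i))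
          (((R'.map φ.symm.toMonoidHom).map φ.toMonoidHom).map
            (Pi.evalMonoidHom (fun i => GL2 (p i ^ e i)) i))
        = ∏ i, conjCount (B0 (p i ^ e i)) (Ri i) := by
          refine Finset.prod_congr rfl fun i _ => ?_
          rw [hmap, map_pi_eval]
      _ = ∏ i, (x i * Nat.card (B0 (p i ^ e i))) := Finset.prod_congr rfl fun i _ => hRie i
      _ = (∏ i, x i) * ∏ i, Nat.card (B0 (p i ^ e i)) := Finset.prod_mul_distrib
end

section
/- Let p be an odd prime and k a positive integer, and let G = GL₂(ℤ/p^kℤ). Then S(C_s(p^k)) = {0, p^{2k} + p^{2k-1}} ∪ {2p^{2j} : 0 ≤ j ≤ k−1}; that is, a natural number m satisfies #{g ∈ G : gRg⁻¹ ⊆ C_s(p^k)} = m · #C_s(p^k) for some subgroup R of G if and only if m lies in this set. -/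
open Matrix

/-- The split Cartan subgroup: all (invertible) diagonal matrices. -/
def Cs (N : ℕ) : Subgroup (GL2 N) where
  carrier := {g | (g : Matrix (Fin 2) (Fin 2) (ZMod N)) 0 1 = 0 ∧
                  (g : Matrix (Fin 2) (Fin 2) (ZMod N)) 1 0 = 0}
  one_mem' := by
    constructor <;> simp [Matrix.one_apply]
  mul_mem' := by
    rintro a b ⟨ha1, ha2⟩ ⟨hb1, hb2⟩
    constructor <;>
      simp [Units.val_mul, Matrix.mul_apply, Fin.sum_univ_two, ha1, ha2, hb1, hb2]
  inv_mem' := by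
    rintro a ⟨h1, h2⟩
    have hdet : IsUnit ((a : Matrix (Fin 2) (Fin 2) (ZMod N)).det) :=
      (Matrix.isUnit_iff_isUnit_det _).mp a.isUnit
    rw [Matrix.det_fin_two, h1, h2] at hdet
    simp only [zero_mul, mul_zero, sub_zero] at hdet
    have h00 : IsUnit ((a : Matrix (Fin 2) (Fin 2) (ZMod N)) 0 0) :=
      isUnit_of_mul_isUnit_left hdet
    have h11 : IsUnit ((a : Matrix (Fin 2) (Fin 2) (ZMod N)) 1 1) :=
      isUnit_of_mul_isUnit_right hdet
    have hmul : ((a : GL2 N) * a⁻¹ : GL2 N) = 1 := mul_inv_cancel a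
    have hmul' : (a : Matrix (Fin 2) (Fin 2) (ZMod N)) *
        ((a⁻¹ : GL2 N) : Matrix (Fin 2) (Fin 2) (ZMod N)) = 1 := by
      have := congrArg (Units.val) hmul
      simpa [Units.val_mul] using this
    constructor
    · have h01 := congrFun (congrFun hmul' 0) 1
      simp only [Matrix.mul_apply, Fin.sum_univ_two, h1, zero_mul, add_zero,
        Matrix.one_apply] at h01
      simp only [show (0 : Fin 2) ≠ 1 by decide, if_neg, if_false] at h01
      exact (h00.mul_right_eq_zero).mp h01
    · have h10 := congrFun (congrFun hmul' 1) 0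
      simp only [Matrix.mul_apply, Fin.sum_univ_two, h2, zero_mul, zero_add,
        Matrix.one_apply] at h10
      simp only [show (1 : Fin 2) ≠ 0 by decide, if_neg, if_false] at h10
      exact (h11.mul_right_eq_zero).mp h10
namespace SCAux

variable {N : ℕ}

abbrev Quad (N : ℕ) := ZMod N × ZMod N × ZMod N × ZMod N

def toQuad (g : GL2 N) : Quad N :=
  ((g : Matrix (Fin 2) (Fin 2) (ZMod N)) 0 0, (g : Matrix (Fin 2) (Fin 2) (ZMod N)) 0 1,
   (g : Matrix (Fin 2) (Fin 2) (ZMod N)) 1 0, (g : Matrix (Fin 2) (Fin 2) (ZMod N)) 1 1)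

def Dq (v : Quad N) : ZMod N := v.1 * v.2.2.2 - v.2.1 * v.2.2.1

noncomputable def eGL : GL2 N ≃ {v : Quad N // IsUnit (Dq v)} where
  toFun g := ⟨toQuad g, by
    have h := (Matrix.isUnit_iff_isUnit_det _).mp g.isUnit
    rwa [Matrix.det_fin_two] at h⟩
  invFun v := ((Matrix.isUnit_iff_isUnit_det
      (!![v.1.1, v.1.2.1; v.1.2.2.1, v.1.2.2.2])).mpr
      (by rw [Matrix.det_fin_two_of]; exact v.2)).unit
  left_inv g := Units.ext (by
    simp only [IsUnit.unit_spec, toQuad]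
    exact (Matrix.eta_fin_two _).symm)
  right_inv v := Subtype.ext (by
    obtain ⟨⟨a, b, c, d⟩, h⟩ := v
    simp [toQuad])

lemma card_set_eq (P : Quad N → Prop) :
    Nat.card {g : GL2 N | P (toQuad g)} = Nat.card {v : Quad N | P v ∧ IsUnit (Dq v)} := by
  apply Nat.card_congr
  exact ((Equiv.subtypeEquiv eGL (fun g => Iff.rfl)).trans
    (Equiv.subtypeSubtypeEquivSubtypeInter _ _)).trans
    (Equiv.subtypeEquivRight fun v => and_comm)

lemma card_quad (P1 P2 P3 P4 : ZMod N → Prop) :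
    Nat.card {v : Quad N | P1 v.1 ∧ P2 v.2.1 ∧ P3 v.2.2.1 ∧ P4 v.2.2.2} =
      Nat.card {a : ZMod N // P1 a} * (Nat.card {a : ZMod N // P2 a} *
        (Nat.card {a : ZMod N // P3 a} * Nat.card {a : ZMod N // P4 a})) := by
  have e : {v : Quad N | P1 v.1 ∧ P2 v.2.1 ∧ P3 v.2.2.1 ∧ P4 v.2.2.2} ≃
      {a : ZMod N // P1 a} × ({a : ZMod N // P2 a} ×
        ({a : ZMod N // P3 a} × {a : ZMod N // P4 a})) :=
    (Equiv.subtypeProdEquivProd).trans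
      (Equiv.prodCongr (Equiv.refl _) ((Equiv.subtypeProdEquivProd).trans
        (Equiv.prodCongr (Equiv.refl _) Equiv.subtypeProdEquivProd)))
  rw [Nat.card_congr e, Nat.card_prod, Nat.card_prod, Nat.card_prod]

lemma card_eq_zero_pred : Nat.card {a : ZMod N // a = 0} = 1 := by
  haveI : Unique {a : ZMod N // a = 0} := ⟨⟨0, rfl⟩, fun x => Subtype.ext x.2⟩
  exact Nat.card_unique

lemma card_isUnit : Nat.card {a : ZMod N // IsUnit a} = Nat.card (ZMod N)ˣ := by
  apply Nat.card_congr
  exact { toFun := fun a => a.2.unit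
          invFun := fun u => ⟨u, u.isUnit⟩
          left_inv := fun a => Subtype.ext a.2.unit_spec
          right_inv := fun u => Units.ext (by simp) }

lemma card_preimage {A B : Type*} [AddGroup A] [AddGroup B] [Finite A] (f : A →+ B)
    (hf : Function.Surjective f) (S : Set B) :
    Nat.card (f ⁻¹' S) = Nat.card S * Nat.card (f ⁻¹' ({0} : Set B)) := by
  choose s hs using hf
  have e : (f ⁻¹' S) ≃ S × (f ⁻¹' ({0} : Set B)) :=
  { toFun := fun x => (⟨f x.1, x.2⟩, ⟨x.1 - s (f x.1), by simp [Set.mem_preimage, hs]⟩)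
    invFun := fun y => ⟨y.2.1 + s y.1.1, by
      have h0 : f y.2.1 = 0 := y.2.2
      simp [Set.mem_preimage, h0, hs, y.1.2]⟩
    left_inv := fun x => Subtype.ext (by simp)
    right_inv := fun y => by
      have h0 : f y.2.1 = 0 := y.2.2
      have hy : f (y.2.1 + s y.1.1) = y.1.1 := by simp [h0, hs]
      ext
      · simp [hy]
      · simp [hy] }
  rw [Nat.card_congr e, Nat.card_prod]

variable {p k : ℕ}

lemma nz (hp : p.Prime) : NeZero (p ^ k) := ⟨pow_ne_zero _ hp.pos.ne'⟩

lemma isUnit_iff_val (hp : p.Prime) (hk : 0 < k) (c : ZMod (p ^ k)) :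
    IsUnit c ↔ ¬ p ∣ c.val := by
  haveI := nz (k := k) hp
  conv_lhs => rw [show c = ((c.val : ℕ) : ZMod (p ^ k)) from (ZMod.natCast_rightInverse c).symm]
  rw [ZMod.isUnit_iff_coprime, Nat.coprime_pow_right_iff hk, Nat.coprime_comm]
  exact hp.coprime_iff_not_dvd

lemma mul_ppow_eq_zero_iff (hp : p.Prime) {i : ℕ} (hi : i ≤ k) (c : ZMod (p ^ k)) :
    c * (p : ZMod (p ^ k)) ^ i = 0 ↔ p ^ (k - i) ∣ c.val := by
  haveI := nz (k := k) hp
  have h1 : c * (p : ZMod (p ^ k)) ^ i = ((c.val * p ^ i : ℕ) : ZMod (p ^ k)) := by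
    push_cast
    rw [ZMod.natCast_rightInverse c]
  rw [h1, ZMod.natCast_eq_zero_iff]
  have h2 : p ^ k = p ^ (k - i) * p ^ i := by rw [← pow_add]; congr 1; omega
  have h3 : (p ^ k ∣ c.val * p ^ i) ↔ (p ^ (k - i) * p ^ i ∣ c.val * p ^ i) := by rw [← h2]
  rw [h3, Nat.mul_dvd_mul_iff_right (pow_pos hp.pos i)]

lemma ppow_ne_zero (hp : p.Prime) {i : ℕ} (hi : i < k) : ((p : ZMod (p ^ k)) ^ i) ≠ 0 := by
  haveI := nz (k := k) hp
  have h1 : ((p : ZMod (p ^ k)) ^ i) = ((p ^ i : ℕ) : ZMod (p ^ k)) := by push_cast; rfl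
  rw [h1, Ne, ZMod.natCast_eq_zero_iff, Nat.pow_dvd_pow_iff_le_right hp.one_lt]
  omega

lemma ppow_k_zero (hp : p.Prime) : ((p : ZMod (p ^ k)) ^ k) = 0 := by
  have h1 : ((p : ZMod (p ^ k)) ^ k) = ((p ^ k : ℕ) : ZMod (p ^ k)) := by push_cast; rfl
  rw [h1, ZMod.natCast_self]

lemma decomp (hp : p.Prime) (d : ZMod (p ^ k)) :
    ∃ m ≤ k, ∃ u : (ZMod (p ^ k))ˣ, d = (p : ZMod (p ^ k)) ^ m * u := by
  haveI := nz (k := k) hp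
  by_cases hd : d = 0
  · exact ⟨k, le_rfl, 1, by rw [hd, ppow_k_zero hp, Units.val_one, zero_mul]⟩
  · have hv : d.val ≠ 0 := fun h => hd ((ZMod.val_eq_zero d).mp h)
    obtain ⟨m, t, hpt, hmt⟩ := Nat.exists_eq_pow_mul_and_not_dvd hv p hp.one_lt.ne'
    have htu : IsUnit ((t : ℕ) : ZMod (p ^ k)) := by
      rw [ZMod.isUnit_iff_coprime]
      exact ((hp.coprime_iff_not_dvd.mpr hpt).symm).pow_right k
    have hmk : m < k := by
      by_contra hc
      push_neg at hc
      have : p ^ k ∣ d.val := hmt ▸ Dvd.dvd.mul_right (pow_dvd_pow p hc) t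
      have := Nat.le_of_dvd (Nat.pos_of_ne_zero hv) this
      have := ZMod.val_lt d
      omega
    refine ⟨m, hmk.le, htu.unit, ?_⟩
    rw [IsUnit.unit_spec]
    conv_lhs => rw [show d = ((d.val : ℕ) : ZMod (p ^ k)) from (ZMod.natCast_rightInverse d).symm]
    rw [hmt]
    push_cast
    ring

lemma nonunit_add (hp : p.Prime) (hk : 0 < k) {a b : ZMod (p ^ k)}
    (ha : ¬ IsUnit a) (hb : ¬ IsUnit b) : ¬ IsUnit (a + b) := by
  haveI := nz (k := k) hp
  rw [isUnit_iff_val hp hk] at *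
  push_neg at *
  rw [ZMod.val_add, Nat.dvd_mod_iff (dvd_pow_self p hk.ne')]
  exact Nat.dvd_add ha hb

lemma castHom_eq_val_cast {d : ℕ} [NeZero (p ^ k)] (hd : d ∣ p ^ k) (x : ZMod (p ^ k)) :
    (ZMod.castHom hd (ZMod d)) x = ((x.val : ℕ) : ZMod d) := by
  conv_lhs => rw [show x = ((x.val : ℕ) : ZMod (p ^ k)) from (ZMod.natCast_rightInverse x).symm]
  simp

lemma card_dvd_val_mul (hp : p.Prime) {d : ℕ} (hd : d ∣ p ^ k) (hd0 : 0 < d) :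
    Nat.card {c : ZMod (p ^ k) // d ∣ c.val} * d = p ^ k := by
  haveI := nz (k := k) hp
  haveI : NeZero d := ⟨hd0.ne'⟩
  set f := (ZMod.castHom hd (ZMod d)).toAddMonoidHom with hf
  have hfs : Function.Surjective f := by
    intro b
    exact ⟨((b.val : ℕ) : ZMod (p ^ k)), by
      show (ZMod.castHom hd (ZMod d)) _ = b
      rw [map_natCast]
      exact ZMod.natCast_rightInverse b⟩
  have h := card_preimage f hfs Set.univ
  rw [Set.preimage_univ] at h
  have h2 : Nat.card {c : ZMod (p ^ k) // d ∣ c.val} = Nat.card (f ⁻¹' ({0} : Set (ZMod d))) := by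
    apply Nat.card_congr
    apply Equiv.subtypeEquivRight
    intro c
    show d ∣ c.val ↔ f c ∈ ({0} : Set (ZMod d))
    rw [Set.mem_singleton_iff]
    show d ∣ c.val ↔ (ZMod.castHom hd (ZMod d)) c = 0
    rw [castHom_eq_val_cast hd, ZMod.natCast_eq_zero_iff]
  rw [h2]
  have hA : Nat.card (Set.univ : Set (ZMod (p ^ k))) = p ^ k := by
    rw [Nat.card_univ, Nat.card_zmod]
  have hB : Nat.card (Set.univ : Set (ZMod d)) = d := by
    rw [Nat.card_univ, Nat.card_zmod]
  rw [hA, hB] at h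
  rw [mul_comm]
  exact h.symm

lemma card_mul_ppow_zero (hp : p.Prime) {i : ℕ} (hi : i ≤ k) :
    Nat.card {c : ZMod (p ^ k) // c * (p : ZMod (p ^ k)) ^ i = 0} = p ^ i := by
  have h1 : Nat.card {c : ZMod (p ^ k) // c * (p : ZMod (p ^ k)) ^ i = 0} =
      Nat.card {c : ZMod (p ^ k) // p ^ (k - i) ∣ c.val} :=
    Nat.card_congr (Equiv.subtypeEquivRight fun c => mul_ppow_eq_zero_iff hp hi c)
  rw [h1]
  have h2 := card_dvd_val_mul hp (d := p ^ (k - i)) (pow_dvd_pow p (Nat.sub_le k i)) (pow_pos hp.pos _)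
  have h3 : p ^ i * p ^ (k - i) = p ^ k := by rw [← pow_add]; congr 1; omega
  exact Nat.eq_of_mul_eq_mul_right (pow_pos hp.pos (k - i)) (h2.trans h3.symm)

lemma card_units_val (hp : p.Prime) (hk : 0 < k) :
    Nat.card {a : ZMod (p ^ k) // IsUnit a} = p ^ (k - 1) * (p - 1) := by
  haveI := nz (k := k) hp
  rw [card_isUnit, Nat.card_eq_fintype_card, ZMod.card_units_eq_totient,
    Nat.totient_prime_pow hp hk]



lemma isUnit_iff_pi (hp : p.Prime) (hk : 0 < k) (c : ZMod (p ^ k)) :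
    IsUnit c ↔ (ZMod.castHom (dvd_pow_self p hk.ne') (ZMod p)) c ≠ 0 := by
  haveI := nz (k := k) hp
  rw [isUnit_iff_val hp hk, castHom_eq_val_cast, Ne, ZMod.natCast_eq_zero_iff]

lemma card_p_dvd (hp : p.Prime) (hk : 0 < k) :
    Nat.card {c : ZMod (p ^ k) // p ∣ c.val} = p ^ (k - 1) := by
  have h := card_dvd_val_mul (k := k) hp (dvd_pow_self p hk.ne') hp.pos
  have h2 : p ^ (k - 1) * p = p ^ k := by rw [← pow_succ]; congr 1; omega
  exact Nat.eq_of_mul_eq_mul_right hp.pos (h.trans h2.symm)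

lemma card_Bset (hp : p.Prime) (hk : 0 < k) {i : ℕ} (hik : i < k) :
    Nat.card {g : GL2 (p ^ k) | (toQuad g).1 * (toQuad g).2.1 * (p : ZMod (p ^ k)) ^ i = 0 ∧
        (toQuad g).2.2.1 * (toQuad g).2.2.2 * (p : ZMod (p ^ k)) ^ i = 0} =
      2 * p ^ i * p ^ i * (p ^ (k - 1) * (p - 1)) * (p ^ (k - 1) * (p - 1)) := by
  haveI := nz (k := k) hp
  have hmain := card_set_eq (N := p ^ k) (fun v => v.1 * v.2.1 * (p : ZMod (p ^ k)) ^ i = 0 ∧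
    v.2.2.1 * v.2.2.2 * (p : ZMod (p ^ k)) ^ i = 0)
  rw [hmain]
  set q : ZMod (p ^ k) := (p : ZMod (p ^ k)) ^ i with hq
  have hpi : q ≠ 0 := ppow_ne_zero hp hik
  set S1 : Set (Quad (p ^ k)) :=
    {v | IsUnit v.1 ∧ v.2.1 * q = 0 ∧ v.2.2.1 * q = 0 ∧ IsUnit v.2.2.2} with hS1
  set S2 : Set (Quad (p ^ k)) :=
    {v | v.1 * q = 0 ∧ IsUnit v.2.1 ∧ IsUnit v.2.2.1 ∧ v.2.2.2 * q = 0} with hS2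
  have hsets : {v : Quad (p ^ k) | (v.1 * v.2.1 * q = 0 ∧ v.2.2.1 * v.2.2.2 * q = 0) ∧
      IsUnit (Dq v)} = S1 ∪ S2 := by
    ext ⟨x, y, z, w⟩
    simp only [hS1, hS2, Set.mem_setOf_eq, Set.mem_union, Dq]
    constructor
    · rintro ⟨⟨h1, h2⟩, hdet⟩
      have hor : IsUnit (x * w) ∨ IsUnit (y * z) := by
        by_contra hc
        push_neg at hc
        obtain ⟨ha, hb⟩ := hc
        have hb' : ¬ IsUnit (-(y * z)) := fun hu => hb ((IsUnit.neg_iff _).mp hu)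
        have := nonunit_add hp hk ha hb'
        rw [← sub_eq_add_neg] at this
        exact this hdet
      rcases hor with hu | hu
      · obtain ⟨hx, hw⟩ := IsUnit.mul_iff.mp hu
        left
        refine ⟨hx, ?_, ?_, hw⟩
        · rw [mul_assoc] at h1
          exact (hx.mul_right_eq_zero).mp h1
        · rw [show z * w * q = w * (z * q) by ring] at h2
          exact (hw.mul_right_eq_zero).mp h2
      · obtain ⟨hy, hz⟩ := IsUnit.mul_iff.mp hu
        right
        refine ⟨?_, hy, hz, ?_⟩
        · rw [show x * y * q = y * (x * q) by ring] at h1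
          exact (hy.mul_right_eq_zero).mp h1
        · rw [show z * w * q = z * (w * q) by ring] at h2
          exact (hz.mul_right_eq_zero).mp h2
    · have keylem : ∀ a b c d : ZMod (p ^ k), IsUnit a → b * q = 0 → c * q = 0 → IsUnit d →
          (a * b * q = 0 ∧ c * d * q = 0) ∧ IsUnit (a * d - b * c) := by
        intro a b c d ha hb hc hd
        refine ⟨⟨by rw [mul_assoc, hb, mul_zero], by rw [show c * d * q = d * (c * q) by ring,
          hc, mul_zero]⟩, ?_⟩
        have hbu : ¬ IsUnit b := fun hu => hpi ((hu.mul_right_eq_zero).mp hb)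
        have hnbc : ¬ IsUnit (b * c) := fun hu => hbu (IsUnit.mul_iff.mp hu).1
        by_contra hcon
        have := nonunit_add hp hk hcon hnbc
        rw [sub_add_cancel] at this
        exact this (ha.mul hd)
      rintro (⟨hx, hy, hz, hw⟩ | ⟨hx, hy, hz, hw⟩)
      · exact keylem x y z w hx hy hz hw
      · obtain ⟨⟨h1, h2⟩, hdet⟩ := keylem y x w z hy hx hw hz
        refine ⟨⟨?_, ?_⟩, ?_⟩
        · rw [show x * y * q = y * x * q by ring]; exact h1
        · rw [show z * w * q = w * z * q by ring]; exact h2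
        · rw [show x * w - y * z = -(y * z - x * w) by ring]
          exact (IsUnit.neg_iff _).mpr hdet
  rw [hsets]
  have hdisj : Disjoint S1 S2 := by
    rw [Set.disjoint_left]
    rintro ⟨x, y, z, w⟩ h1 h2
    exact hpi ((h1.1.mul_right_eq_zero).mp h2.1)
  rw [Nat.card_coe_set_eq, Set.ncard_union_eq hdisj (Set.toFinite _) (Set.toFinite _)]
  have c1 : S1.ncard = (p ^ (k - 1) * (p - 1)) * (p ^ i * (p ^ i * (p ^ (k - 1) * (p - 1)))) := by
    rw [← Nat.card_coe_set_eq, hS1]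
    rw [card_quad (fun a => IsUnit a) (fun a => a * q = 0) (fun a => a * q = 0)
      (fun a => IsUnit a), card_units_val hp hk, card_mul_ppow_zero hp hik.le]
  have c2 : S2.ncard = p ^ i * ((p ^ (k - 1) * (p - 1)) * ((p ^ (k - 1) * (p - 1)) * p ^ i)) := by
    rw [← Nat.card_coe_set_eq, hS2]
    rw [card_quad (fun a => a * q = 0) (fun a => IsUnit a) (fun a => IsUnit a)
      (fun a => a * q = 0), card_units_val hp hk, card_mul_ppow_zero hp hik.le]
  rw [c1, c2]
  ring


lemma mem_Cs_iff {N : ℕ} (g : GL2 N) :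
    g ∈ Cs N ↔ ((g : Matrix (Fin 2) (Fin 2) (ZMod N)) 0 1 = 0 ∧
      (g : Matrix (Fin 2) (Fin 2) (ZMod N)) 1 0 = 0) := Iff.rfl

lemma card_Cs (hp : p.Prime) (hk : 0 < k) :
    Nat.card ((Cs (p ^ k) : Subgroup (GL2 (p ^ k))) : Set (GL2 (p ^ k))) =
      (p ^ (k - 1) * (p - 1)) * (p ^ (k - 1) * (p - 1)) := by
  haveI := nz (k := k) hp
  have h0 : ((Cs (p ^ k) : Subgroup (GL2 (p ^ k))) : Set (GL2 (p ^ k))) =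
      {g : GL2 (p ^ k) | (toQuad g).2.1 = 0 ∧ (toQuad g).2.2.1 = 0} := by
    ext g; exact mem_Cs_iff g
  rw [h0]
  rw [card_set_eq (N := p ^ k) (fun v => v.2.1 = 0 ∧ v.2.2.1 = 0)]
  have hsets : {v : Quad (p ^ k) | (v.2.1 = 0 ∧ v.2.2.1 = 0) ∧ IsUnit (Dq v)} =
      {v : Quad (p ^ k) | IsUnit v.1 ∧ v.2.1 = 0 ∧ v.2.2.1 = 0 ∧ IsUnit v.2.2.2} := by
    ext ⟨x, y, z, w⟩
    simp only [Set.mem_setOf_eq, Dq]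
    constructor
    · rintro ⟨⟨hy, hz⟩, hdet⟩
      subst hy; subst hz
      rw [zero_mul, sub_zero] at hdet
      obtain ⟨hx, hw⟩ := IsUnit.mul_iff.mp hdet
      exact ⟨hx, rfl, rfl, hw⟩
    · rintro ⟨hx, hy, hz, hw⟩
      subst hy; subst hz
      rw [zero_mul, sub_zero]
      exact ⟨⟨rfl, rfl⟩, hx.mul hw⟩
  rw [hsets, card_quad (fun a => IsUnit a) (fun a => a = 0) (fun a => a = 0) (fun a => IsUnit a),
    card_units_val hp hk, card_eq_zero_pred]
  ring

lemma card_GL2 (hp : p.Prime) (hk : 0 < k) :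
    Nat.card (GL2 (p ^ k)) =
      (p ^ (2 * k) + p ^ (2 * k - 1)) * ((p ^ (k - 1) * (p - 1)) * (p ^ (k - 1) * (p - 1))) := by
  haveI := nz (k := k) hp
  haveI : Fact p.Prime := ⟨hp⟩
  have h0 : Nat.card (GL2 (p ^ k)) =
      Nat.card {g : GL2 (p ^ k) | (fun _ => True) (toQuad g)} :=
    (Nat.card_congr (Equiv.subtypeUnivEquiv fun g => trivial)).symm
  rw [h0, card_set_eq (N := p ^ k) (fun _ => True)]
  set ρ := ZMod.castHom (dvd_pow_self p hk.ne') (ZMod p) with hρ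
  set π := ρ.toAddMonoidHom with hπdef
  set F := AddMonoidHom.prodMap π (AddMonoidHom.prodMap π (AddMonoidHom.prodMap π π)) with hF
  have hπs : Function.Surjective π := by
    intro b
    refine ⟨((b.val : ℕ) : ZMod (p ^ k)), ?_⟩
    show ρ _ = b
    rw [map_natCast]
    exact ZMod.natCast_rightInverse b
  have hFs : Function.Surjective F := by
    exact Function.Surjective.prodMap hπs (Function.Surjective.prodMap hπs
      (Function.Surjective.prodMap hπs hπs))
  have hset : {v : Quad (p ^ k) | True ∧ IsUnit (Dq v)} =
      F ⁻¹' {w : Quad p | IsUnit (Dq w)} := by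
    ext ⟨x, y, z, w⟩
    simp only [Set.mem_setOf_eq, Set.mem_preimage, true_and]
    have hFv : F (x, y, z, w) = (ρ x, ρ y, ρ z, ρ w) := rfl
    rw [hFv]
    show IsUnit (x * w - y * z) ↔ IsUnit (ρ x * ρ w - ρ y * ρ z)
    rw [isUnit_iff_pi hp hk, isUnit_iff_ne_zero]
    have : ρ (x * w - y * z) = ρ x * ρ w - ρ y * ρ z := by
      rw [map_sub, _root_.map_mul, _root_.map_mul]
    rw [← hρ, this]
  rw [hset, card_preimage F hFs]
  have hGLp : Nat.card {w : Quad p | IsUnit (Dq w)} = (p ^ 2 - 1) * (p ^ 2 - p) := by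
    haveI : NeZero p := ⟨hp.pos.ne'⟩
    have h1 : Nat.card (GL2 p) = Nat.card {g : GL2 p | (fun _ => True) (toQuad g)} :=
      (Nat.card_congr (Equiv.subtypeUnivEquiv fun g => trivial)).symm
    have h2 := card_set_eq (N := p) (fun _ => True)
    have h3 : {w : Quad p | True ∧ IsUnit (Dq w)} = {w : Quad p | IsUnit (Dq w)} := by
      ext w; simp
    rw [h3] at h2
    rw [← h2, ← h1, Matrix.card_GL_field 2, Fin.prod_univ_two]
    simp [ZMod.card]
  have hker : Nat.card (F ⁻¹' ({0} : Set (Quad p))) =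
      p ^ (k - 1) * (p ^ (k - 1) * (p ^ (k - 1) * p ^ (k - 1))) := by
    have hk0 : (F ⁻¹' ({0} : Set (Quad p))) =
        {v : Quad (p ^ k) | p ∣ v.1.val ∧ p ∣ v.2.1.val ∧ p ∣ v.2.2.1.val ∧ p ∣ v.2.2.2.val} := by
      ext ⟨x, y, z, w⟩
      have hFv : F (x, y, z, w) = (ρ x, ρ y, ρ z, ρ w) := rfl
      simp only [Set.mem_preimage, Set.mem_singleton_iff, Set.mem_setOf_eq, hFv]
      rw [show (0 : Quad p) = ((0 : ZMod p), (0 : ZMod p), (0 : ZMod p), (0 : ZMod p)) from rfl]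
      rw [Prod.ext_iff, Prod.ext_iff, Prod.ext_iff]
      simp only [hρ, castHom_eq_val_cast, ZMod.natCast_eq_zero_iff]
    rw [hk0, card_quad (fun a => p ∣ a.val) (fun a => p ∣ a.val) (fun a => p ∣ a.val)
      (fun a => p ∣ a.val), card_p_dvd hp hk]
  rw [hGLp, hker]
  obtain ⟨k1, rfl⟩ : ∃ k1, k = k1 + 1 := ⟨k - 1, by omega⟩
  obtain ⟨p1, rfl⟩ : ∃ p1, p = p1 + 2 := ⟨p - 2, by have := hp.two_le; omega⟩
  have e1 : (p1 + 2) ^ 2 - 1 = p1 ^ 2 + 4 * p1 + 3 := by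
    have : (p1 + 2) ^ 2 = p1 ^ 2 + 4 * p1 + 4 := by ring
    omega
  have e2 : (p1 + 2) ^ 2 - (p1 + 2) = p1 ^ 2 + 3 * p1 + 2 := by
    have : (p1 + 2) ^ 2 = p1 ^ 2 + 4 * p1 + 4 := by ring
    omega
  have e3 : p1 + 2 - 1 = p1 + 1 := by omega
  have e4 : k1 + 1 - 1 = k1 := by omega
  have e5 : 2 * (k1 + 1) = 2 * k1 + 2 := by omega
  have e6 : 2 * (k1 + 1) - 1 = 2 * k1 + 1 := by omega
  rw [e1, e2, e3, e4, e6, e5]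
  have e7 : (p1 + 2) ^ (2 * k1 + 2) = ((p1 + 2) ^ k1) ^ 2 * (p1 + 2) ^ 2 := by
    rw [← pow_mul, ← pow_add]; congr 1; ring
  have e8 : (p1 + 2) ^ (2 * k1 + 1) = ((p1 + 2) ^ k1) ^ 2 * (p1 + 2) := by
    rw [pow_succ, mul_comm 2 k1, pow_mul]
  rw [e7, e8]
  set q := (p1 + 2) ^ k1
  ring

/-- difference of diagonal entries -/
def dif {N : ℕ} (r : GL2 N) : ZMod N :=
  (r : Matrix (Fin 2) (Fin 2) (ZMod N)) 0 0 - (r : Matrix (Fin 2) (Fin 2) (ZMod N)) 1 1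

lemma conj_mem_iff {N : ℕ} (g r : GL2 N) (hr : r ∈ Cs N) :
    g * r * g⁻¹ ∈ Cs N ↔
      ((g : Matrix (Fin 2) (Fin 2) (ZMod N)) 0 0 * (g : Matrix (Fin 2) (Fin 2) (ZMod N)) 0 1 *
        dif r = 0 ∧
       (g : Matrix (Fin 2) (Fin 2) (ZMod N)) 1 0 * (g : Matrix (Fin 2) (Fin 2) (ZMod N)) 1 1 *
        dif r = 0) := by
  obtain ⟨hr1, hr2⟩ := hr
  set G := (g : Matrix (Fin 2) (Fin 2) (ZMod N)) with hG
  set Rm := (r : Matrix (Fin 2) (Fin 2) (ZMod N)) with hRm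
  have hdet : IsUnit G.det := (Matrix.isUnit_iff_isUnit_det _).mp g.isUnit
  have hinv : ((g⁻¹ : GL2 N) : Matrix (Fin 2) (Fin 2) (ZMod N)) =
      Ring.inverse G.det • G.adjugate := by
    rw [Matrix.coe_units_inv, Matrix.inv_def]
  have hval : ((g * r * g⁻¹ : GL2 N) : Matrix (Fin 2) (Fin 2) (ZMod N)) =
      Ring.inverse G.det • (G * Rm * G.adjugate) := by
    rw [Units.val_mul, Units.val_mul, hinv, mul_smul_comm]
  have hM01 : (G * Rm * G.adjugate) 0 1 = G 0 0 * G 0 1 * (Rm 1 1 - Rm 0 0) := by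
    rw [Matrix.adjugate_fin_two]
    simp [Matrix.mul_apply, Fin.sum_univ_two, hr1, hr2]
    ring
  have hM10 : (G * Rm * G.adjugate) 1 0 = G 1 0 * G 1 1 * (Rm 0 0 - Rm 1 1) := by
    rw [Matrix.adjugate_fin_two]
    simp [Matrix.mul_apply, Fin.sum_univ_two, hr1, hr2]
    ring
  have hcancel : ∀ t : ZMod N, Ring.inverse G.det * t = 0 ↔ t = 0 := by
    intro t
    constructor
    · intro h
      have := congrArg (fun s => G.det * s) h
      simp only [mul_zero, ← mul_assoc, Ring.mul_inverse_cancel G.det hdet, one_mul] at this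
      exact this
    · intro h; rw [h, mul_zero]
  have hmem : g * r * g⁻¹ ∈ Cs N ↔
      (((g * r * g⁻¹ : GL2 N) : Matrix (Fin 2) (Fin 2) (ZMod N)) 0 1 = 0 ∧
       ((g * r * g⁻¹ : GL2 N) : Matrix (Fin 2) (Fin 2) (ZMod N)) 1 0 = 0) := Iff.rfl
  rw [hmem, hval]
  simp only [Matrix.smul_apply, smul_eq_mul, hM01, hM10, hcancel]
  constructor
  · rintro ⟨h1, h2⟩
    refine ⟨?_, h2⟩
    rw [show G 0 0 * G 0 1 * dif r = -(G 0 0 * G 0 1 * (Rm 1 1 - Rm 0 0)) by rw [dif]; ring, h1,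
      neg_zero]
  · rintro ⟨h1, h2⟩
    refine ⟨?_, h2⟩
    rw [show G 0 0 * G 0 1 * (Rm 1 1 - Rm 0 0) = -(G 0 0 * G 0 1 * dif r) by rw [dif]; ring, h1,
      neg_zero]

/-- the unipotent matrix as an element of GL2 -/
def uni (N : ℕ) : GL2 N :=
  ⟨!![1, 1; 0, 1], !![1, -1; 0, 1], by
    rw [Matrix.mul_fin_two, Matrix.one_fin_two]; norm_num, by
    rw [Matrix.mul_fin_two, Matrix.one_fin_two]; norm_num⟩

lemma uni_notMem (hp : p.Prime) (hk : 0 < k) : uni (p ^ k) ∉ Cs (p ^ k) := by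
  haveI : Fact (1 < p ^ k) := ⟨Nat.one_lt_pow hk.ne' hp.one_lt⟩
  intro h
  obtain ⟨h1, h2⟩ := h
  have : ((uni (p ^ k) : GL2 (p ^ k)) : Matrix (Fin 2) (Fin 2) (ZMod (p ^ k)))  0 1 = 1 := by
    rfl
  rw [this] at h1
  exact one_ne_zero h1

/-- diagonal element of GL2 from two units -/
def diagGL {N : ℕ} (a b : (ZMod N)ˣ) : GL2 N :=
  ⟨!![(a : ZMod N), 0; 0, (b : ZMod N)], !![((a⁻¹ : (ZMod N)ˣ) : ZMod N), 0; 0, ((b⁻¹ : (ZMod N)ˣ) : ZMod N)], by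
    rw [Matrix.mul_fin_two, Matrix.one_fin_two]
    norm_num, by
    rw [Matrix.mul_fin_two, Matrix.one_fin_two]
    norm_num⟩

lemma diagGL_entries {N : ℕ} (a b : (ZMod N)ˣ) :
    ((diagGL a b : GL2 N) : Matrix (Fin 2) (Fin 2) (ZMod N)) 0 0 = (a : ZMod N) ∧
    ((diagGL a b : GL2 N) : Matrix (Fin 2) (Fin 2) (ZMod N)) 0 1 = 0 ∧
    ((diagGL a b : GL2 N) : Matrix (Fin 2) (Fin 2) (ZMod N)) 1 0 = 0 ∧
    ((diagGL a b : GL2 N) : Matrix (Fin 2) (Fin 2) (ZMod N)) 1 1 = (b : ZMod N) := by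
  refine ⟨rfl, rfl, rfl, rfl⟩

end SCAux

theorem S_split_cartan (p k : ℕ) (hp : p.Prime) (hodd : Odd p) (hk : 0 < k) :
    Sset ((Cs (p ^ k) : Subgroup (GL2 (p ^ k))) : Set (GL2 (p ^ k))) =
      {m | m = 0 ∨ m = p ^ (2 * k) + p ^ (2 * k - 1) ∨ ∃ j < k, m = 2 * p ^ (2 * j)} := by
  classical
  haveI := SCAux.nz (k := k) hp
  have hφpos : 0 < p ^ (k - 1) * (p - 1) := by
    have h2 := hp.two_le
    have h3 : 0 < p ^ (k - 1) := pow_pos hp.pos _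
    have h4 : 0 < p - 1 := by omega
    exact Nat.mul_pos h3 h4
  have hφφpos : 0 < (p ^ (k - 1) * (p - 1)) * (p ^ (k - 1) * (p - 1)) := Nat.mul_pos hφpos hφpos
  have hcardH := SCAux.card_Cs (k := k) hp hk
  ext m
  simp only [Sset, Set.mem_setOf_eq, conjCount, SetLike.mem_coe]
  constructor
  · rintro ⟨R, hR⟩
    by_cases hex : ∃ g₀ : GL2 (p ^ k), ∀ r ∈ R, g₀ * r * g₀⁻¹ ∈ Cs (p ^ k)
    · obtain ⟨g₀, hg₀⟩ := hex
      set R' := Subgroup.map (MulAut.conj g₀).toMonoidHom R with hR'def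
      have hR'le : ∀ r' ∈ R', r' ∈ Cs (p ^ k) := by
        rintro r' hr'
        obtain ⟨r, hr, rfl⟩ := hr'
        simpa [MulAut.conj_apply] using hg₀ r hr
      have htrans : Nat.card {g : GL2 (p ^ k) | ∀ r ∈ R, g * r * g⁻¹ ∈ Cs (p ^ k)} =
          Nat.card {g : GL2 (p ^ k) | ∀ r' ∈ R', g * r' * g⁻¹ ∈ Cs (p ^ k)} := by
        apply Nat.card_congr
        refine Equiv.subtypeEquiv (Equiv.mulRight g₀⁻¹) ?_
        intro g
        simp only [Equiv.coe_mulRight, Set.mem_setOf_eq]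
        constructor
        · intro h r' hr'
          obtain ⟨r, hr, rfl⟩ := hr'
          have heq : g * g₀⁻¹ * ((MulAut.conj g₀).toMonoidHom r) * (g * g₀⁻¹)⁻¹ =
              g * r * g⁻¹ := by
            simp only [MulEquiv.coe_toMonoidHom, MulAut.conj_apply]
            group
          rw [heq]
          exact h r hr
        · intro h r hr
          have h' := h ((MulAut.conj g₀).toMonoidHom r) ⟨r, hr, rfl⟩
          have heq : g * g₀⁻¹ * ((MulAut.conj g₀).toMonoidHom r) * (g * g₀⁻¹)⁻¹ =
              g * r * g⁻¹ := by
            simp only [MulEquiv.coe_toMonoidHom, MulAut.conj_apply]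
            group
          rwa [heq] at h'
      rw [htrans] at hR
      set W : Set ℕ := {n | n < k ∧ ∃ r' ∈ R', ∃ u : (ZMod (p ^ k))ˣ,
          SCAux.dif r' = (p : ZMod (p ^ k)) ^ n * u} with hWdef
      by_cases hW : W.Nonempty
      · set i := sInf W with hidef
        obtain ⟨hik, r₀, hr₀, u₀, hu₀⟩ := Nat.sInf_mem hW
        have hle : ∀ n ∈ W, i ≤ n := fun n hn => Nat.sInf_le hn
        have hsetB : {g : GL2 (p ^ k) | ∀ r' ∈ R', g * r' * g⁻¹ ∈ Cs (p ^ k)} =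
            {g : GL2 (p ^ k) | (SCAux.toQuad g).1 * (SCAux.toQuad g).2.1 *
                (p : ZMod (p ^ k)) ^ i = 0 ∧
              (SCAux.toQuad g).2.2.1 * (SCAux.toQuad g).2.2.2 *
                (p : ZMod (p ^ k)) ^ i = 0} := by
          ext g
          simp only [Set.mem_setOf_eq]
          constructor
          · intro h
            have h₀ := (SCAux.conj_mem_iff g r₀ (hR'le r₀ hr₀)).mp (h r₀ hr₀)
            rw [hu₀] at h₀
            obtain ⟨h1, h2⟩ := h₀
            rw [← mul_assoc] at h1 h2
            exact ⟨(Units.mul_left_eq_zero u₀).mp h1, (Units.mul_left_eq_zero u₀).mp h2⟩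
          · rintro ⟨h1, h2⟩ r' hr'
            rw [SCAux.conj_mem_iff g r' (hR'le r' hr')]
            have key : ∀ a : ZMod (p ^ k), a * (p : ZMod (p ^ k)) ^ i = 0 →
                a * SCAux.dif r' = 0 := by
              intro a ha
              obtain ⟨n, hnk, u, hu⟩ := SCAux.decomp hp (SCAux.dif r')
              by_cases hnk' : n < k
              · have hin : i ≤ n := hle n ⟨hnk', r', hr', u, hu⟩
                have hsplit : (p : ZMod (p ^ k)) ^ n =
                    (p : ZMod (p ^ k)) ^ i * (p : ZMod (p ^ k)) ^ (n - i) := by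
                  rw [← pow_add]; congr 1; omega
                rw [hu, hsplit, show a * ((p : ZMod (p ^ k)) ^ i * (p : ZMod (p ^ k)) ^ (n - i) *
                  (u : ZMod (p ^ k))) = (a * (p : ZMod (p ^ k)) ^ i) *
                  ((p : ZMod (p ^ k)) ^ (n - i) * (u : ZMod (p ^ k))) from by ring, ha, zero_mul]
              · have hnk2 : n = k := by omega
                rw [hu, hnk2, SCAux.ppow_k_zero hp, zero_mul, mul_zero]
            exact ⟨key _ h1, key _ h2⟩
        rw [hsetB, SCAux.card_Bset hp hk hik, hcardH] at hR
        right; right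
        refine ⟨i, hik, ?_⟩
        have h2i : (2 * p ^ (2 * i)) * ((p ^ (k - 1) * (p - 1)) * (p ^ (k - 1) * (p - 1))) =
            2 * p ^ i * p ^ i * (p ^ (k - 1) * (p - 1)) * (p ^ (k - 1) * (p - 1)) := by
          rw [two_mul i, pow_add]; ring
        have := (hR.symm.trans h2i.symm.symm.symm)
        have hmm : m * ((p ^ (k - 1) * (p - 1)) * (p ^ (k - 1) * (p - 1))) =
            (2 * p ^ (2 * i)) * ((p ^ (k - 1) * (p - 1)) * (p ^ (k - 1) * (p - 1))) :=
          hR.symm.trans h2i.symm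
        exact (Nat.eq_of_mul_eq_mul_right hφφpos hmm)
      · have hall : ∀ r' ∈ R', SCAux.dif r' = 0 := by
          intro r' hr'
          obtain ⟨n, hnk, u, hu⟩ := SCAux.decomp hp (SCAux.dif r')
          by_cases hnk' : n < k
          · exact absurd ⟨n, hnk', r', hr', u, hu⟩ hW
          · rw [hu, show n = k by omega, SCAux.ppow_k_zero hp, zero_mul]
        have hsetU : {g : GL2 (p ^ k) | ∀ r' ∈ R', g * r' * g⁻¹ ∈ Cs (p ^ k)} = Set.univ := by
          ext g
          simp only [Set.mem_setOf_eq, Set.mem_univ, iff_true]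
          intro r' hr'
          rw [SCAux.conj_mem_iff g r' (hR'le r' hr'), hall r' hr']
          exact ⟨mul_zero _, mul_zero _⟩
        rw [hsetU, Nat.card_univ, SCAux.card_GL2 hp hk, hcardH] at hR
        right; left
        exact Nat.eq_of_mul_eq_mul_right hφφpos hR.symm
    · left
      have hempty : {g : GL2 (p ^ k) | ∀ r ∈ R, g * r * g⁻¹ ∈ Cs (p ^ k)} = ∅ := by
        rw [Set.eq_empty_iff_forall_notMem]
        intro g hg
        exact hex ⟨g, hg⟩
      rw [hempty] at hR
      rw [Nat.card_coe_set_eq, Set.ncard_empty] at hR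
      rcases Nat.mul_eq_zero.mp hR.symm with h | h
      · exact h
      · rw [hcardH] at h; omega
  · intro hm
    rcases hm with rfl | rfl | ⟨j, hjk, rfl⟩
    · refine ⟨⊤, ?_⟩
      have hempty : {g : GL2 (p ^ k) | ∀ r ∈ (⊤ : Subgroup (GL2 (p ^ k))),
          g * r * g⁻¹ ∈ Cs (p ^ k)} = ∅ := by
        rw [Set.eq_empty_iff_forall_notMem]
        intro g hg
        have h1 := hg (g⁻¹ * SCAux.uni (p ^ k) * g) (Subgroup.mem_top _)
        have heq : g * (g⁻¹ * SCAux.uni (p ^ k) * g) * g⁻¹ = SCAux.uni (p ^ k) := by group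
        rw [heq] at h1
        exact SCAux.uni_notMem hp hk h1
      rw [hempty, Nat.card_coe_set_eq, Set.ncard_empty, zero_mul]
    · refine ⟨⊥, ?_⟩
      have huniv : {g : GL2 (p ^ k) | ∀ r ∈ (⊥ : Subgroup (GL2 (p ^ k))),
          g * r * g⁻¹ ∈ Cs (p ^ k)} = Set.univ := by
        ext g
        simp only [Set.mem_setOf_eq, Set.mem_univ, iff_true]
        intro r hr
        rw [Subgroup.mem_bot] at hr
        subst hr
        rw [mul_one, mul_inv_cancel]
        exact (Cs (p ^ k)).one_mem
      rw [huniv, Nat.card_univ, SCAux.card_GL2 hp hk, hcardH]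
    · have hunit : IsUnit (1 + (p : ZMod (p ^ k)) ^ j) := by
        rcases Nat.eq_zero_or_pos j with rfl | hj
        · rw [pow_zero]
          have h3 : 3 ≤ p := by
            rcases hodd with ⟨t, ht⟩
            have := hp.two_le
            omega
          rw [show (1 : ZMod (p ^ k)) + 1 = ((2 : ℕ) : ZMod (p ^ k)) by push_cast; ring]
          rw [SCAux.isUnit_iff_val hp hk, ZMod.val_natCast]
          have hlt : 2 < p ^ k := by
            have := Nat.le_self_pow hk.ne' p
            omega
          rw [Nat.mod_eq_of_lt hlt]
          intro hdvd
          have := Nat.le_of_dvd (by norm_num) hdvd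
          omega
        · have hnu : ¬ IsUnit ((p : ZMod (p ^ k)) ^ j) := by
            rw [SCAux.isUnit_iff_val hp hk, not_not]
            have hcast : ((p : ZMod (p ^ k)) ^ j) = ((p ^ j : ℕ) : ZMod (p ^ k)) := by
              push_cast; rfl
            rw [hcast, ZMod.val_natCast]
            exact (Nat.dvd_mod_iff (dvd_pow_self p hk.ne')).mpr (dvd_pow_self p hj.ne')
          by_contra hcon
          have h1 : ¬ IsUnit (-((p : ZMod (p ^ k)) ^ j)) := fun h =>
            hnu ((IsUnit.neg_iff _).mp h)
          have h2 := SCAux.nonunit_add hp hk hcon h1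
          rw [add_neg_cancel_right] at h2
          exact h2 isUnit_one
      set rj := SCAux.diagGL hunit.unit 1 with hrjdef
      obtain ⟨e00, e01, e10, e11⟩ := SCAux.diagGL_entries (N := p ^ k) hunit.unit 1
      rw [IsUnit.unit_spec] at e00
      rw [Units.val_one] at e11
      have hrjCs : rj ∈ Cs (p ^ k) := ⟨e01, e10⟩
      have hrjdif : SCAux.dif rj = (p : ZMod (p ^ k)) ^ j := by
        rw [SCAux.dif, e00, e11, add_sub_cancel_left]
      refine ⟨Subgroup.zpowers rj, ?_⟩
      have hprop : ∀ r ∈ Subgroup.zpowers rj, r ∈ Cs (p ^ k) ∧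
          ∃ c : ZMod (p ^ k), SCAux.dif r = (p : ZMod (p ^ k)) ^ j * c := by
        intro r hr
        rw [Subgroup.zpowers_eq_closure] at hr
        refine Subgroup.closure_induction
          (p := fun r _ => r ∈ Cs (p ^ k) ∧
            ∃ c : ZMod (p ^ k), SCAux.dif r = (p : ZMod (p ^ k)) ^ j * c) ?_ ?_ ?_ ?_ hr
        · rintro x hx
          rw [Set.mem_singleton_iff] at hx
          subst hx
          exact ⟨hrjCs, 1, by rw [hrjdif, mul_one]⟩
        · refine ⟨(Cs (p ^ k)).one_mem, 0, ?_⟩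
          rw [SCAux.dif, mul_zero]
          norm_num
        · rintro a b _ _ ⟨haCs, ca, hca⟩ ⟨hbCs, cb, hcb⟩
          refine ⟨(Cs (p ^ k)).mul_mem haCs hbCs, ?_⟩
          obtain ⟨ha01, ha10⟩ := haCs
          obtain ⟨hb01, hb10⟩ := hbCs
          have hd : SCAux.dif (a * b) =
              (a : Matrix (Fin 2) (Fin 2) (ZMod (p ^ k))) 0 0 *
                (b : Matrix (Fin 2) (Fin 2) (ZMod (p ^ k))) 0 0 -
              (a : Matrix (Fin 2) (Fin 2) (ZMod (p ^ k))) 1 1 *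
                (b : Matrix (Fin 2) (Fin 2) (ZMod (p ^ k))) 1 1 := by
            rw [SCAux.dif, Units.val_mul]
            simp [Matrix.mul_apply, Fin.sum_univ_two, ha01, ha10, hb01, hb10]
          refine ⟨(a : Matrix (Fin 2) (Fin 2) (ZMod (p ^ k))) 0 0 * cb +
            (b : Matrix (Fin 2) (Fin 2) (ZMod (p ^ k))) 1 1 * ca, ?_⟩
          rw [hd]
          rw [SCAux.dif] at hca hcb
          linear_combination (a : Matrix (Fin 2) (Fin 2) (ZMod (p ^ k))) 0 0 * hcb +
            (b : Matrix (Fin 2) (Fin 2) (ZMod (p ^ k))) 1 1 * hca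
        · rintro a _ ⟨haCs, ca, hca⟩
          refine ⟨(Cs (p ^ k)).inv_mem haCs, ?_⟩
          obtain ⟨ha01, ha10⟩ := haCs
          have hprodm : (a : Matrix (Fin 2) (Fin 2) (ZMod (p ^ k))) *
              ((a⁻¹ : GL2 (p ^ k)) : Matrix (Fin 2) (Fin 2) (ZMod (p ^ k))) = 1 := by
            rw [← Units.val_mul, mul_inv_cancel, Units.val_one]
          have e1 := congrFun (congrFun hprodm 0) 0
          have e2 := congrFun (congrFun hprodm 1) 1
          simp only [Matrix.mul_apply, Fin.sum_univ_two, ha01, ha10, zero_mul, add_zero,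
            zero_add, Matrix.one_apply_eq] at e1 e2
          rw [SCAux.dif] at hca ⊢
          refine ⟨-(((a⁻¹ : GL2 (p ^ k)) : Matrix (Fin 2) (Fin 2) (ZMod (p ^ k))) 0 0 *
            ((a⁻¹ : GL2 (p ^ k)) : Matrix (Fin 2) (Fin 2) (ZMod (p ^ k))) 1 1 * ca), ?_⟩
          linear_combination ((a⁻¹ : GL2 (p ^ k)) : Matrix (Fin 2) (Fin 2) (ZMod (p ^ k))) 1 1 * e1 -
            ((a⁻¹ : GL2 (p ^ k)) : Matrix (Fin 2) (Fin 2) (ZMod (p ^ k))) 0 0 * e2 -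
            ((a⁻¹ : GL2 (p ^ k)) : Matrix (Fin 2) (Fin 2) (ZMod (p ^ k))) 0 0 *
            ((a⁻¹ : GL2 (p ^ k)) : Matrix (Fin 2) (Fin 2) (ZMod (p ^ k))) 1 1 * hca
      have hset : {g : GL2 (p ^ k) | ∀ r ∈ Subgroup.zpowers rj, g * r * g⁻¹ ∈ Cs (p ^ k)} =
          {g : GL2 (p ^ k) | (SCAux.toQuad g).1 * (SCAux.toQuad g).2.1 *
              (p : ZMod (p ^ k)) ^ j = 0 ∧
            (SCAux.toQuad g).2.2.1 * (SCAux.toQuad g).2.2.2 *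
              (p : ZMod (p ^ k)) ^ j = 0} := by
        ext g
        simp only [Set.mem_setOf_eq]
        constructor
        · intro h
          have h₀ := (SCAux.conj_mem_iff g rj hrjCs).mp (h rj (Subgroup.mem_zpowers rj))
          rw [hrjdif] at h₀
          exact h₀
        · rintro ⟨h1, h2⟩ r hr
          obtain ⟨hrCs, c, hc⟩ := hprop r hr
          rw [SCAux.conj_mem_iff g r hrCs, hc]
          constructor
          · rw [← mul_assoc]
            exact mul_eq_zero_of_left h1 c
          · rw [← mul_assoc]
            exact mul_eq_zero_of_left h2 c
      rw [hset, SCAux.card_Bset hp hk hjk, hcardH]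
      rw [two_mul j, pow_add]
      ring
end
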